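/- arXiv:math/0205217 — 8 statements merged into one kernel-verified Lean document; each statement's English description precedes it below -/
import Mathlib

section
/- Let A = {a_1, ..., a_n} and let S_1^n = { XX : X a nonempty word over A } be the set of squares. Define words by X_1 = a_1 and X_i = X_{i-1} a_i X_{i-1}. Then X_n has length 2^n - 1, is square-free (contains no factor of the form XX with X nonempty), and for every letter a_i in A, the word X_n a_i contains a square factor. Hence X_n is a crucial word with respect to S_1^n. -/
/-!
`X_{n+1} = X_n n X_n` contains its new letter `n` exactly once. A square `XX` inside it
would contain `n` twice if `X` did, so `X` avoids `n`, and then `XX` lies inside one of the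
two copies of `X_n`. Conversely, for `i < n` the word `X_{i+1} = X_i i X_i` is a suffix of
`X_n`, so `X_n i` ends with the square `(X_i i)(X_i i)`.
-/

/-- `Xw 0 = []`, `Xw (i+1) = Xw i ++ [a_{i+1}] ++ Xw i`, where the letter
`a_{i+1}` is represented by the natural number `i`. -/
def Xw : ℕ → List ℕ
  | 0 => []
  | i + 1 => Xw i ++ [i] ++ Xw i

namespace List

variable {α : Type*}

theorem eq_nil_of_prefix_cons_of_not_mem {w l : List α} {c : α} (h : w <+: c :: l)
    (hc : c ∉ w) : w = [] := by
  rcases prefix_cons_iff.mp h with hw | ⟨t, rfl, -⟩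
  · exact hw
  · exact absurd mem_cons_self hc

theorem infix_or_infix_of_infix_append_cons {w l l' : List α} {c : α}
    (h : w <:+: l ++ c :: l') (hc : c ∉ w) : w <:+: l ∨ w <:+: l' := by
  rcases infix_append_iff.mp h with hl | hl' | ⟨w₁, w₂, rfl, hw₁, hw₂⟩
  · exact .inl hl
  · rcases infix_cons_iff.mp hl' with hp | hl'
    · exact .inl (eq_nil_of_prefix_cons_of_not_mem hp hc ▸ nil_infix)
    · exact .inr hl'
  · have hw₂ : w₂ = [] := eq_nil_of_prefix_cons_of_not_mem hw₂ (fun h => hc (mem_append_right _ h))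
    subst hw₂
    exact .inl (by simpa using hw₁.isInfix)

theorem not_mem_of_append_self_infix [DecidableEq α] {X w : List α} {c : α}
    (h : X ++ X <:+: w) (hc : w.count c ≤ 1) : c ∉ X := by
  intro hX
  have : (X ++ X).count c ≤ w.count c := h.sublist.count_le c
  have : 1 ≤ X.count c := one_le_count_iff.mpr hX
  rw [count_append] at *
  omega

end List

theorem Xw_succ (n : ℕ) : Xw (n + 1) = Xw n ++ n :: Xw n := by
  simp [Xw]

theorem length_Xw (n : ℕ) : (Xw n).length = 2 ^ n - 1 := by
  induction n with
  | zero => rfl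
  | succ n ih =>
    rw [Xw_succ, List.length_append, List.length_cons, ih, pow_succ]
    have : 1 ≤ 2 ^ n := Nat.one_le_two_pow
    omega

theorem lt_of_mem_Xw {n x : ℕ} (h : x ∈ Xw n) : x < n := by
  induction n with
  | zero => simp [Xw] at h
  | succ n ih =>
    rw [Xw_succ, List.mem_append, List.mem_cons] at h
    rcases h with h | rfl | h
    · exact Nat.lt_succ_of_lt (ih h)
    · exact Nat.lt_succ_self _
    · exact Nat.lt_succ_of_lt (ih h)

theorem count_Xw_succ_self (n : ℕ) : (Xw (n + 1)).count n = 1 := by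
  have : n ∉ Xw n := fun h => (lt_of_mem_Xw h).false
  simp [Xw_succ, List.count_append, List.count_eq_zero_of_not_mem this]

theorem Xw_suffix_Xw {m n : ℕ} (h : m ≤ n) : Xw m <:+ Xw n := by
  induction n, h using Nat.le_induction with
  | base => exact List.suffix_refl _
  | succ n _ ih =>
    rw [Xw_succ]
    exact List.suffix_append_of_suffix (ih.trans (List.suffix_cons _ _))

theorem not_append_self_infix_Xw (n : ℕ) {X : List ℕ} (hX : X ≠ []) : ¬ X ++ X <:+: Xw n := by
  induction n with
  | zero => simpa [Xw] using hX
  | succ n ih =>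
    intro h
    have hn : n ∉ X ++ X := by
      simpa using List.not_mem_of_append_self_infix h (count_Xw_succ_self n).le
    rw [Xw_succ] at h
    exact (List.infix_or_infix_of_infix_append_cons h hn).elim ih ih

theorem append_self_suffix_Xw_append {i n : ℕ} (hi : i < n) :
    (Xw i ++ [i]) ++ (Xw i ++ [i]) <:+ Xw n ++ [i] := by
  have h := (List.suffix_append_self_iff (l₃ := [i])).mpr (Xw_suffix_Xw hi)
  simpa [Xw_succ] using h

/-- The word `X_n` has length `2^n - 1`, is a word over the `n`-letter alphabet
`{0, …, n-1}`, is square-free, and appending any letter of the alphabet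
creates a square factor; hence `X_n` is crucial w.r.t. the set of squares. -/
theorem Xw_crucial (n : ℕ) :
    (Xw n).length = 2 ^ n - 1 ∧
    (∀ x ∈ Xw n, x < n) ∧
    (∀ X : List ℕ, X ≠ [] → ¬ (X ++ X) <:+: Xw n) ∧
    (∀ i, i < n → ∃ X : List ℕ, X ≠ [] ∧ (X ++ X) <:+: (Xw n ++ [i])) :=
  ⟨length_Xw n, fun _ => lt_of_mem_Xw, fun _ => not_append_self_infix_Xw n,
    fun _ hi => ⟨_, by simp, (append_self_suffix_Xw_append hi).isInfix⟩⟩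
end

section
/- Let A = {a_1,...,a_n} and S_1^n = { XX : X a nonempty word over A }. Then the minimal length of a crucial word with respect to S_1^n equals 2^n - 1: there exists a crucial word of length 2^n - 1, and every crucial word with respect to S_1^n has length at least 2^n - 1. -/
/-- A word is square-free if it has no factor `X ++ X` with `X` nonempty. -/
def SqFree {α : Type*} (w : List α) : Prop :=
  ∀ X : List α, X ≠ [] → ¬ (X ++ X) <:+: w

/-- A word over the `n`-letter alphabet `Fin n` is crucial w.r.t. the set of
squares if it is square-free but appending any letter creates a square factor. -/
def CrucialSq {n : ℕ} (w : List (Fin n)) : Prop :=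
  SqFree w ∧ ∀ a : Fin n, ∃ X : List (Fin n), X ≠ [] ∧ (X ++ X) <:+: (w ++ [a])

open List

/-- Zimin word over ℕ. -/
def Zim : ℕ → List ℕ
  | 0 => []
  | k+1 => Zim k ++ k :: Zim k

lemma Zim_length (k : ℕ) : (Zim k).length = 2 ^ k - 1 := by
  induction k with
  | zero => rfl
  | succ k ih =>
    have h1 : 1 ≤ 2 ^ k := Nat.one_le_two_pow
    simp [Zim, ih, pow_succ]; omega

lemma mem_Zim {m k : ℕ} (h : m ∈ Zim k) : m < k := by
  induction k with
  | zero => simp [Zim] at h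
  | succ k ih =>
    simp [Zim] at h
    rcases h with h | h | h
    · exact (ih h).trans (Nat.lt_succ_self k)
    · omega
    · exact (ih h).trans (Nat.lt_succ_self k)

lemma count_Zim (k : ℕ) : count k (Zim (k+1)) = 1 := by
  have : k ∉ Zim k := fun h => lt_irrefl k (mem_Zim h)
  simp [Zim, count_cons, count_eq_zero_of_not_mem this]

/-- Infix splitting around a letter not in the infix. -/
lemma infix_split {α : Type*} {l u v : List α} {c : α}
    (h : l <:+: u ++ c :: v) (hc : c ∉ l) : l <:+: u ∨ l <:+: v := by
  obtain ⟨s, t, hst⟩ := h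
  by_cases h1 : s.length + l.length ≤ u.length
  · left
    have hsl : s ++ l <+: u := by
      have h2 : s ++ l = take (s.length + l.length) (u ++ c :: v) := by
        rw [← hst]
        rw [show s ++ l ++ t = (s ++ l) ++ t by simp, take_append_of_le_length (by simp)]
        simp
      rw [h2, take_append_of_le_length h1]
      exact take_prefix _ _
    exact ((suffix_append s l).isInfix).trans hsl.isInfix
  · by_cases h2 : u.length + 1 ≤ s.length
    · right
      have h3 : l ++ t = drop s.length (u ++ c :: v) := by
        rw [← hst, show s ++ l ++ t = s ++ (l ++ t) by simp, drop_append_of_le_length (le_refl _)]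
        simp
      rw [drop_append, drop_eq_nil_of_le (by omega)] at h3
      have h4 : s.length - u.length = (s.length - u.length - 1) + 1 := by omega
      rw [h4] at h3
      simp only [nil_append, drop_succ_cons] at h3
      have h5 : l <+: drop (s.length - u.length - 1) v := ⟨t, h3⟩
      exact h5.isInfix.trans (drop_suffix _ _).isInfix
    · exfalso
      apply hc
      push_neg at h1 h2
      have heq : s ++ (l ++ t) = u ++ c :: v := by simpa using hst
      have hlen2 : u.length < (s ++ (l ++ t)).length := by
        rw [heq]; simp
      have hc2 : (s ++ (l ++ t))[u.length]'hlen2 = c := by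
        simp only [heq]
        rw [getElem_append_right (le_refl _)]
        simp
      rw [getElem_append_right (by omega)] at hc2
      have hj : u.length - s.length < l.length := by omega
      rw [getElem_append_left hj] at hc2
      rw [← hc2]
      exact getElem_mem _

lemma Zim_sqfree (k : ℕ) : SqFree (Zim k) := by
  induction k with
  | zero => intro X hX h; simp [Zim] at h; exact hX (by simpa using congrArg List.length h)
  | succ k ih =>
    intro X hX h
    by_cases hk : k ∈ X
    · have h1 : count k (X ++ X) ≤ count k (Zim (k+1)) := h.count_le k
      rw [count_Zim, count_append] at h1
      have h2 : 1 ≤ count k X := count_pos_iff.2 hk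
      omega
    · have hk2 : k ∉ X ++ X := by simp [hk]
      rcases infix_split (h : (X ++ X) <:+: Zim k ++ k :: Zim k) hk2 with h' | h'
      · exact ih X hX h'
      · exact ih X hX h'

lemma Zim_succ_suffix {k m : ℕ} (h : k < m) : Zim (k+1) <:+ Zim m := by
  induction m with
  | zero => omega
  | succ m ih =>
    rcases Nat.lt_succ_iff_lt_or_eq.1 h with h' | h'
    · have h1 : Zim m <:+ Zim (m+1) := by
        have : Zim m <:+ m :: Zim m := suffix_cons m (Zim m)
        exact this.trans (suffix_append _ _)
      exact (ih h').trans h1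
    · rw [h']

def zimF (n : ℕ) : List (Fin n) :=
  (Zim n).pmap (fun m h => (⟨m, h⟩ : Fin n)) (fun _ hm => mem_Zim hm)

lemma zimF_map_val (n : ℕ) : (zimF n).map Fin.val = Zim n := by
  unfold zimF
  rw [map_pmap]
  simp

lemma zimF_length (n : ℕ) : (zimF n).length = 2 ^ n - 1 := by
  have := congrArg List.length (zimF_map_val n)
  simpa [Zim_length] using this

lemma zimF_sqfree (n : ℕ) : SqFree (zimF n) := by
  intro X hX h
  have h1 : (X.map Fin.val ++ X.map Fin.val) <:+: Zim n := by
    have := h.map Fin.val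
    rwa [map_append, zimF_map_val] at this
  exact Zim_sqfree n (X.map Fin.val) (by simpa using hX) h1

lemma zimF_crucial (n : ℕ) : CrucialSq (zimF n) := by
  refine ⟨zimF_sqfree n, fun a => ?_⟩
  -- ℕ-level: Zim n ++ [a.val] has suffix (Zim a ++ [a]) ++ (Zim a ++ [a])
  obtain ⟨u, hu⟩ := Zim_succ_suffix a.isLt
  have hNat : (zimF n ++ [a]).map Fin.val
      = u ++ ((Zim a.val ++ [a.val]) ++ (Zim a.val ++ [a.val])) := by
    rw [map_append, zimF_map_val]
    simp only [map_cons, map_nil]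
    rw [← hu]
    simp [Zim]
  rw [map_eq_append_iff] at hNat
  obtain ⟨u', p, hsplit, -, hp⟩ := hNat
  rw [map_eq_append_iff] at hp
  obtain ⟨s₁, s₂, hp2, hs₁, hs₂⟩ := hp
  have hinj : Function.Injective (List.map (Fin.val : Fin n → ℕ)) :=
    map_injective_iff.2 Fin.val_injective
  have hss : s₁ = s₂ := hinj (hs₁.trans hs₂.symm)
  refine ⟨s₁, ?_, ?_⟩
  · intro h0
    rw [h0] at hs₁
    exact absurd hs₁.symm (by simp)
  · rw [← hss] at hp2
    exact ⟨u', [], by rw [hsplit, hp2]; simp⟩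

lemma suffix_eq_of_length_eq {α : Type*} {s₁ s₂ w : List α}
    (h1 : s₁ <:+ w) (h2 : s₂ <:+ w) (h : s₁.length = s₂.length) : s₁ = s₂ := by
  rw [suffix_iff_eq_drop] at h1 h2
  rw [h1, h2, h]

lemma gap_lemma {α : Type*} {w Ya Yb : List α} {a b : α} (hsf : SqFree w)
    (h1 : (Ya ++ a :: Ya) <:+ w) (h2 : (Yb ++ b :: Yb) <:+ w)
    (hlt : Ya.length < Yb.length) : 2 * Ya.length + 1 ≤ Yb.length := by
  by_contra hz
  push_neg at hz
  set y := Ya.length with hy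
  set z := Yb.length with hzz
  -- Yb is a suffix of w
  have hYbw : Yb <:+ w := by
    have : Yb <:+ Yb ++ b :: Yb := ⟨Yb ++ [b], by simp⟩
    exact this.trans h2
  -- Yb is a suffix of Ya ++ a :: Ya
  have hYb1 : Yb <:+ Ya ++ a :: Ya := by
    rcases suffix_or_suffix_of_suffix hYbw h1 with h | h
    · exact h
    · exfalso
      have := h.length_le
      simp only [length_append, length_cons] at this
      omega
  set V := Ya.drop (2*y+1-z) with hV
  have hVlen : V.length = z - y - 1 := by
    simp only [hV, length_drop]
    omega
  have hYbeq : Yb = V ++ a :: Ya := by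
    have he := suffix_iff_eq_drop.1 hYb1
    have hL : (Ya ++ a :: Ya).length - Yb.length = 2*y+1-z := by
      simp only [length_append, length_cons]
      omega
    rw [hL] at he
    rw [he, drop_append_of_le_length (by omega)]
  -- Ya ++ a :: Ya is a suffix of Yb ++ b :: Yb
  have hS12 : (Ya ++ a :: Ya) <:+ (Yb ++ b :: Yb) := by
    rcases suffix_or_suffix_of_suffix h1 h2 with h | h
    · exact h
    · exfalso
      have := h.length_le
      simp only [length_append, length_cons] at this
      omega
  set D := Ya.drop (z-y) with hD
  have hYa : Ya = D ++ b :: V := by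
    have he := suffix_iff_eq_drop.1 hS12
    have hL : (Yb ++ b :: Yb).length - (Ya ++ a :: Ya).length = 2*z - 2*y := by
      simp only [length_append, length_cons]
      omega
    rw [hL] at he
    rw [drop_append_of_le_length (by omega)] at he
    have hdrop : Yb.drop (2*z - 2*y) = D := by
      rw [hYbeq, drop_append, drop_eq_nil_of_le (by omega), hVlen]
      have : 2*z - 2*y - (z - y - 1) = (z - y) + 1 := by omega
      rw [this]
      simp [hD]
    rw [hdrop, hYbeq] at he
    have he2 : Ya ++ (a :: Ya) = (D ++ b :: V) ++ (a :: Ya) := by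
      rw [he]
      simp
    exact (append_inj' he2 rfl).1
  -- the square (b :: V) ++ (b :: V) occurs in w
  have hsq : ((b :: V) ++ (b :: V)) <:+: w := by
    refine IsInfix.trans ⟨V ++ [a] ++ D, a :: Ya, ?_⟩ h2.isInfix
    rw [hYbeq]
    rw [hYa]
    simp
  exact hsf (b :: V) (cons_ne_nil _ _) hsq

lemma crucial_suffix {n : ℕ} {w : List (Fin n)} (hsf : SqFree w) (a : Fin n)
    (h : ∃ X : List (Fin n), X ≠ [] ∧ (X ++ X) <:+: (w ++ [a])) :
    ∃ Y : List (Fin n), (Y ++ a :: Y) <:+ w := by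
  obtain ⟨X, hX, s, t, hst⟩ := h
  rcases eq_nil_or_concat t with rfl | ⟨t', c, rfl⟩
  · rcases eq_nil_or_concat X with rfl | ⟨Y, c, rfl⟩
    · exact absurd rfl hX
    · have heq : (s ++ (Y ++ [c] ++ Y)) ++ [c] = w ++ [a] := by
        rw [← hst]; simp
      obtain ⟨h1, h2⟩ := append_inj' heq rfl
      have hca : c = a := by simpa using h2
      exact ⟨Y, s, by rw [← h1, hca]; simp⟩
  · have heq : (s ++ (X ++ X) ++ t') ++ [c] = w ++ [a] := by
      rw [← hst]; simp
    obtain ⟨h1, -⟩ := append_inj' heq rfl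
    exact absurd ⟨s, t', h1⟩ (hsf X hX)

lemma finset_pow : ∀ (S : Finset ℕ) (hS : S.Nonempty),
    (∀ x ∈ S, ∀ y ∈ S, x < y → 2*x+1 ≤ y) → 2 ^ S.card ≤ 2 * S.max' hS + 2 := by
  intro S
  induction S using Finset.strongInductionOn with
  | _ S ih =>
    intro hS hgap
    rcases Nat.lt_or_ge S.card 2 with h2 | h2
    · have h1 : S.card = 1 := by
        have := Finset.card_pos.2 hS
        omega
      rw [h1]
      omega
    · set m := S.max' hS with hm
      have hmS : m ∈ S := S.max'_mem hS
      set S' := S.erase m with hS'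
      have hsub : S' ⊂ S := Finset.erase_ssubset hmS
      have hS'ne : S'.Nonempty := by
        rw [← Finset.card_pos, hS', Finset.card_erase_of_mem hmS]
        omega
      have hgap' : ∀ x ∈ S', ∀ y ∈ S', x < y → 2*x+1 ≤ y := fun x hx y hy =>
        hgap x (Finset.mem_of_mem_erase hx) y (Finset.mem_of_mem_erase hy)
      have hih := ih S' hsub hS'ne hgap'
      set m' := S'.max' hS'ne with hm'
      have hm'S : m' ∈ S := Finset.mem_of_mem_erase (S'.max'_mem hS'ne)
      have hm'ne : m' ≠ m := Finset.ne_of_mem_erase (S'.max'_mem hS'ne)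
      have hm'lt : m' < m := lt_of_le_of_ne (S.le_max' m' hm'S) hm'ne
      have hg : 2 * m' + 1 ≤ m := hgap m' hm'S m hmS hm'lt
      have hcard : S'.card = S.card - 1 := by
        rw [hS', Finset.card_erase_of_mem hmS]
      rw [hcard] at hih
      have hpow : 2 ^ S.card = 2 * 2 ^ (S.card - 1) := by
        rw [← pow_succ']
        congr 1
        omega
      omega

lemma lower_bound {n : ℕ} (w : List (Fin n)) (h : CrucialSq w) : 2 ^ n - 1 ≤ w.length := by
  obtain ⟨hsf, hc⟩ := h
  rcases Nat.eq_zero_or_pos n with hn | hn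
  · subst hn; simp
  have hY : ∀ a : Fin n, ∃ Y, (Y ++ a :: Y) <:+ w := fun a => crucial_suffix hsf a (hc a)
  choose Y hYs using hY
  have hinj : Function.Injective fun a => (Y a).length := by
    intro a b hab
    simp only at hab
    have hlen : (Y a ++ a :: Y a).length = (Y b ++ b :: Y b).length := by
      simp [hab]
    have heq := suffix_eq_of_length_eq (hYs a) (hYs b) hlen
    have := (append_inj' heq (by simp [hab])).2
    exact (List.cons_eq_cons.1 this).1
  set S : Finset ℕ := Finset.image (fun a => (Y a).length) Finset.univ with hS
  have hcard : S.card = n := by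
    rw [hS, Finset.card_image_of_injective _ hinj, Finset.card_univ, Fintype.card_fin]
  have hSne : S.Nonempty := by
    rw [← Finset.card_pos, hcard]; omega
  have hgap : ∀ x ∈ S, ∀ y ∈ S, x < y → 2*x+1 ≤ y := by
    intro x hx y hy hxy
    rw [hS, Finset.mem_image] at hx hy
    obtain ⟨a, -, rfl⟩ := hx
    obtain ⟨b, -, rfl⟩ := hy
    exact gap_lemma hsf (hYs a) (hYs b) hxy
  have hpow := finset_pow S hSne hgap
  rw [hcard] at hpow
  obtain ⟨a₀, -, ha₀⟩ := Finset.mem_image.1 (S.max'_mem hSne)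
  have hwlen : 2 * (Y a₀).length + 1 ≤ w.length := by
    have := (hYs a₀).length_le
    simp only [length_append, length_cons] at this
    omega
  rw [ha₀] at hwlen
  omega

/-- The minimal length of a crucial word w.r.t. the set of squares over an
`n`-letter alphabet equals `2^n - 1`. -/
theorem Lmin_squares (n : ℕ) :
    (∃ w : List (Fin n), CrucialSq w ∧ w.length = 2 ^ n - 1) ∧
    (∀ w : List (Fin n), CrucialSq w → 2 ^ n - 1 ≤ w.length) :=
  ⟨⟨zimF n, zimF_crucial n, zimF_length n⟩, fun w hw => lower_bound w hw⟩
end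

section
/- Let A = {a_1,...,a_n} with n > 2, and let S_2^n be the set of abelian squares over A, i.e. words XY where X and Y are nonempty and have the same content vector (same number of occurrences of each letter). The word W = a_{n-2}a_{n-1}a_{n-3}a_{n-2}···a_1a_2 · a_n a_{n-2}a_{n-3}···a_2 a_1 a_2···a_{n-3}a_{n-2} a_n (of length 4n-7) contains no abelian square as a factor, and for every letter a in A the word Wa contains an abelian square factor. Hence W is crucial with respect to S_2^n and L_min(S_2^n) ≤ 4n - 7. -/
/-- A word (over the alphabet `{1, …, n} ⊆ ℕ`) is free from abelian squares if
no factor is a concatenation `X ++ Y` of two nonempty words with the same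
content vector. -/
def AbSqFree (w : List ℕ) : Prop :=
  ∀ X Y : List ℕ, X ≠ [] → Y ≠ [] → (∀ c : ℕ, X.count c = Y.count c) →
    ¬ (X ++ Y) <:+: w

/-- The word
`W = a_{n-2} a_{n-1} a_{n-3} a_{n-2} ⋯ a_1 a_2 · a_n a_{n-2} ⋯ a_2 a_1 a_2 ⋯ a_{n-2} a_n`,
with the letter `a_i` represented by the natural number `i`. -/
def Wword (n : ℕ) : List ℕ :=
  ((List.range (n - 2)).reverse.flatMap (fun j => [j + 1, j + 2]))
    ++ [n]
    ++ ((List.range (n - 2)).reverse.map (fun j => j + 1))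
    ++ ((List.range (n - 3)).map (fun j => j + 2))
    ++ [n]

/-- the pairs word `k k+1 k-1 k ... 1 2` -/
def Pw (k : ℕ) : List ℕ := (List.range k).reverse.flatMap (fun j => [j + 1, j + 2])

lemma Pw_succ (k : ℕ) : Pw (k + 1) = (k + 1) :: (k + 2) :: Pw k := by
  simp [Pw, List.range_succ]

lemma count_Pw (j c : ℕ) : (Pw j).count c =
    (if 1 ≤ c ∧ c ≤ j then 1 else 0) + (if 2 ≤ c ∧ c ≤ j + 1 then 1 else 0) := by
  induction j with
  | zero => simp [Pw]; split_ifs <;> omega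
  | succ k ih =>
      rw [Pw_succ]
      simp [List.count_cons, ih]
      split_ifs <;> omega

lemma length_Pw (k : ℕ) : (Pw k).length = 2 * k := by
  induction k with
  | zero => simp [Pw]
  | succ k ih => rw [Pw_succ]; simp [ih]; omega

lemma mem_Pw {j x : ℕ} (h : x ∈ Pw j) : 1 ≤ x ∧ x ≤ j + 1 := by
  have h1 : 0 < (Pw j).count x := List.count_pos_iff.2 h
  rw [count_Pw] at h1
  split_ifs at h1 <;> omega

lemma suffix_Pw {s : List ℕ} : ∀ {k : ℕ}, s <:+ Pw k →
    (∃ j, j ≤ k ∧ s = Pw j) ∨ (∃ j, j + 1 ≤ k ∧ s = (j + 2) :: Pw j) := by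
  intro k
  induction k with
  | zero =>
      intro h
      left
      refine ⟨0, le_refl _, ?_⟩
      have h2 : s <:+ ([] : List ℕ) := by simpa [Pw] using h
      have := List.suffix_nil.1 h2
      simp [this, Pw]
  | succ k ih =>
      intro h
      rw [Pw_succ] at h
      rcases List.suffix_cons_iff.1 h with h1 | h
      · exact Or.inl ⟨k + 1, le_refl _, by rw [h1, Pw_succ]⟩
      rcases List.suffix_cons_iff.1 h with h1 | h
      · exact Or.inr ⟨k, le_refl _, h1⟩
      rcases ih h with ⟨j, hj, rfl⟩ | ⟨j, hj, rfl⟩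
      · exact Or.inl ⟨j, by omega, rfl⟩
      · exact Or.inr ⟨j, by omega, rfl⟩

lemma Pw_suffix_Pw {j k : ℕ} (h : j ≤ k) : Pw j <:+ Pw k := by
  induction k with
  | zero => have : j = 0 := by omega
            subst this; exact List.suffix_refl _
  | succ k ih =>
      rcases Nat.eq_or_lt_of_le h with rfl | h'
      · exact List.suffix_refl _
      · rw [Pw_succ]
        exact ((ih (by omega)).trans (List.suffix_cons _ _)).trans (List.suffix_cons _ _)

lemma prefix_split {α : Type*} {F A B : List α} {x : α}
    (h : F <+: A ++ x :: B) (hx : x ∉ F) : F <+: A := by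
  induction A generalizing F with
  | nil =>
      cases F with
      | nil => exact List.nil_prefix
      | cons f F' =>
          rw [List.nil_append, List.cons_prefix_cons] at h
          exact absurd (h.1 ▸ List.mem_cons_self) hx
  | cons a A' ih =>
      cases F with
      | nil => exact List.nil_prefix
      | cons f F' =>
          rw [List.cons_append, List.cons_prefix_cons] at h
          have := ih h.2 (fun hm => hx (List.mem_cons_of_mem _ hm))
          exact List.cons_prefix_cons.2 ⟨h.1, this⟩

lemma infix_split_s7 {α : Type*} {F A B : List α} {x : α}
    (h : F <:+: A ++ x :: B) (hx : x ∉ F) : F <:+: A ∨ F <:+: B := by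
  induction A generalizing F with
  | nil =>
      rw [List.nil_append] at h
      rcases List.infix_cons_iff.1 h with hp | hi
      · cases F with
        | nil => exact Or.inl (List.nil_infix)
        | cons f F' =>
            rw [List.cons_prefix_cons] at hp
            exact absurd (hp.1 ▸ List.mem_cons_self) hx
      · exact Or.inr hi
  | cons a A' ih =>
      rw [List.cons_append] at h
      rcases List.infix_cons_iff.1 h with hp | hi
      · left
        exact (prefix_split (A := a :: A') (B := B) (x := x)
          (by rw [List.cons_append]; exact hp) hx).isInfix
      · rcases ih hi hx with h1 | h1
        · exact Or.inl (List.infix_cons h1)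
        · exact Or.inr h1

lemma suffix_concat {α : Type*} {t Q : List α} {x : α} (h : t <:+ Q ++ [x]) :
    t = [] ∨ x ∈ t := by
  rcases List.eq_nil_or_concat t with rfl | ⟨t', y, rfl⟩
  · exact Or.inl rfl
  · right
    rcases h with ⟨u, hu⟩
    have h2 : (u ++ t'.concat y).getLast? = (Q ++ [x]).getLast? := by rw [hu]
    rw [List.concat_eq_append, ← List.append_assoc, List.getLast?_concat,
      List.getLast?_concat] at h2
    simp at h2
    simp [h2]

lemma odd_of_infix_nodup {F L : List ℕ} (hF : F ≠ []) (h : F <:+: L) (hL : L.Nodup) :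
    ∃ c, F.count c = 1 := by
  cases F with
  | nil => exact absurd rfl hF
  | cons c F' =>
      have hnd : (c :: F').Nodup := h.sublist.nodup hL
      refine ⟨c, ?_⟩
      rw [List.count_cons]
      have h0 : F'.count c = 0 := List.count_eq_zero.2 (List.nodup_cons.1 hnd).1
      simp [h0]

lemma count_range_add (d k c : ℕ) :
    ((List.range k).map (fun x => x + d)).count c = if d ≤ c ∧ c < k + d then 1 else 0 := by
  induction k with
  | zero => simp
  | succ k ih =>
      rw [List.range_succ]
      simp [List.count_append, ih, List.count_singleton]
      split_ifs <;> omega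

lemma count_rev_range_add (d k c : ℕ) :
    ((List.range k).reverse.map (fun x => x + d)).count c =
      if d ≤ c ∧ c < k + d then 1 else 0 := by
  rw [List.map_reverse, List.count_reverse, count_range_add]

lemma Wword_eq (m : ℕ) : Wword (m + 3) =
    Pw (m + 1) ++ [m + 3] ++ ((List.range (m + 1)).reverse.map (fun j => j + 1))
      ++ ((List.range m).map (fun j => j + 2)) ++ [m + 3] := by
  rfl

lemma D_eq (m : ℕ) : (List.range (m + 1)).reverse.map (fun j => j + 1) =
    ((List.range m).reverse.map (fun j => j + 2)) ++ [1] := by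
  rw [List.range_succ_eq_map]
  simp [List.map_reverse, List.map_map]

lemma D_split (l d : ℕ) : (List.range (l + d)).reverse.map (fun j => j + 1) =
    ((List.range d).map (fun x => x + (l + 1))).reverse
      ++ (List.range l).reverse.map (fun j => j + 1) := by
  rw [List.range_add]
  simp [List.map_reverse, List.map_map]
  intro a _
  omega

lemma nodup_rev_range_add (d k : ℕ) : (((List.range k).reverse.map (fun x => x + d))).Nodup := by
  refine List.Nodup.map (fun a b hab => by omega) ?_
  exact List.nodup_reverse.2 (List.nodup_range (n := k))

lemma nodup_range_add (d k : ℕ) : (((List.range k).map (fun x => x + d))).Nodup := by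
  refine List.Nodup.map (fun a b hab => by omega) (List.nodup_range (n := k))

lemma pairs_free : ∀ (k : ℕ) (F : List ℕ), F ≠ [] → F <:+: Pw k →
    (∀ c, 2 ∣ F.count c) → False := by
  intro k
  induction k with
  | zero =>
      intro F hF h _
      have h2 : F <:+: ([] : List ℕ) := by simpa [Pw] using h
      exact hF (List.sublist_nil.1 h2.sublist)
  | succ k ih =>
      intro F hF h heven
      rw [Pw_succ] at h
      rcases List.infix_cons_iff.1 h with hp | h
      · cases F with
        | nil => exact hF rfl
        | cons f F' =>
            rw [List.cons_prefix_cons] at hp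
            obtain ⟨rfl, hp⟩ := hp
            cases F' with
            | nil =>
                have h1 := heven (k + 1)
                rw [List.count_cons, List.count_nil] at h1
                simp at h1
            | cons g F'' =>
                rw [List.cons_prefix_cons] at hp
                obtain ⟨rfl, hp⟩ := hp
                have hle : F''.count (k + 2) ≤ (Pw k).count (k + 2) :=
                  hp.sublist.count_le _
                rw [count_Pw] at hle
                have h1 := heven (k + 2)
                rw [List.count_cons, List.count_cons] at h1
                simp only [beq_iff_eq] at h1
                split_ifs at hle <;> split_ifs at h1 <;> omega
      rcases List.infix_cons_iff.1 h with hp | h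
      · cases F with
        | nil => exact hF rfl
        | cons f F' =>
            rw [List.cons_prefix_cons] at hp
            obtain ⟨rfl, hp⟩ := hp
            have hle : F'.count (k + 2) ≤ (Pw k).count (k + 2) :=
              hp.sublist.count_le _
            rw [count_Pw] at hle
            have h1 := heven (k + 2)
            rw [List.count_cons] at h1
            simp only [beq_iff_eq] at h1
            split_ifs at hle <;> split_ifs at h1 <;> omega
      · exact ih F hF h heven

lemma key (m : ℕ) (F : List ℕ) (hF : F ≠ []) (hinf : F <:+: Wword (m + 3))
    (heven : ∀ c, 2 ∣ F.count c) : False := by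
  rw [Wword_eq] at hinf
  set D : List ℕ := (List.range (m + 1)).reverse.map (fun j => j + 1) with hD
  set A : List ℕ := (List.range m).map (fun j => j + 2) with hA
  -- letter m+2 occurs exactly once in W
  have hcle : ∀ c, F.count c ≤
      (Pw (m+1) ++ [m+3] ++ D ++ A ++ [m+3]).count c := fun c => hinf.sublist.count_le c
  have h2 : F.count (m + 2) = 0 := by
    have h3 := hcle (m + 2)
    simp only [List.count_append, count_Pw, hD, hA, count_rev_range_add, count_range_add,
      List.count_singleton, beq_iff_eq] at h3
    have h4 := heven (m + 2)
    split_ifs at h3 <;> omega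
  have hne2 : (m + 2) ∉ F := List.count_eq_zero.1 h2
  -- W = [m+1] ++ (m+2) :: rest
  have hinf' : F <:+: [m + 1] ++ (m + 2) ::
      (Pw m ++ [m+3] ++ D ++ A ++ [m+3]) := by
    rw [show ([m+1] ++ (m+2) :: (Pw m ++ [m+3] ++ D ++ A ++ [m+3]))
        = Pw (m+1) ++ [m+3] ++ D ++ A ++ [m+3] by rw [Pw_succ]; simp]
    exact hinf
  rcases infix_split_s7 hinf' hne2 with h | h
  · -- F infix of [m+1]
    rcases List.sublist_singleton.1 h.sublist with rfl | rfl
    · exact hF rfl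
    · have h1 := heven (m + 1)
      rw [List.count_cons, List.count_nil] at h1
      simp at h1
  -- F infix of B := Pw m ++ [m+3] ++ D ++ A ++ [m+3]
  have hcleB : ∀ c, F.count c ≤ (Pw m ++ [m+3] ++ D ++ A ++ [m+3]).count c :=
    fun c => h.sublist.count_le c
  have hcn : F.count (m + 3) = 0 ∨ F.count (m + 3) = 2 := by
    have h3 := hcleB (m + 3)
    simp only [List.count_append, count_Pw, hD, hA, count_rev_range_add, count_range_add,
      List.count_singleton, beq_iff_eq] at h3
    have h4 := heven (m + 3)
    split_ifs at h3 <;> omega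
  rcases hcn with hcn | hcn
  · -- F avoids the letter m+3
    have hne3 : (m + 3) ∉ F := List.count_eq_zero.1 hcn
    have h' : F <:+: Pw m ++ (m + 3) :: (D ++ A ++ [m+3]) := by
      simpa [List.append_assoc] using h
    rcases infix_split_s7 h' hne3 with h1 | h1
    · exact pairs_free m F hF h1 heven
    have h'' : F <:+: (D ++ A) ++ (m + 3) :: ([] : List ℕ) := by
      simpa [List.append_assoc] using h1
    rcases infix_split_s7 h'' hne3 with h2' | h2'
    swap
    · exact hF (List.sublist_nil.1 h2'.sublist)
    -- F infix of D ++ A ; letter 1 occurs once there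
    have hc1 : F.count 1 = 0 := by
      have h3 : F.count 1 ≤ (D ++ A).count 1 := h2'.sublist.count_le 1
      simp only [List.count_append, hD, hA, count_rev_range_add, count_range_add] at h3
      have h4 := heven 1
      split_ifs at h3 <;> omega
    have hne1 : (1 : ℕ) ∉ F := List.count_eq_zero.1 hc1
    have h3' : F <:+: ((List.range m).reverse.map (fun j => j + 2)) ++ (1 : ℕ) :: A := by
      rw [show (((List.range m).reverse.map (fun j => j + 2)) ++ (1:ℕ) :: A)
          = D ++ A by rw [hD, D_eq]; simp]
      exact h2'
    rcases infix_split_s7 h3' hne1 with h4 | h4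
    · obtain ⟨c, hc⟩ := odd_of_infix_nodup hF h4 (nodup_rev_range_add 2 m)
      have := heven c; omega
    · obtain ⟨c, hc⟩ := odd_of_infix_nodup hF h4 (nodup_range_add 2 m)
      have := heven c; omega
  · -- F contains both occurrences of m+3 : F is a suffix structure
    obtain ⟨s, t, hst⟩ := h
    have hcountB : (Pw m ++ [m+3] ++ D ++ A ++ [m+3]).count (m+3) = 2 := by
      simp only [List.count_append, count_Pw, hD, hA, count_rev_range_add, count_range_add,
        List.count_singleton, beq_iff_eq]
      split_ifs <;> omega
    have hsum : s.count (m+3) + F.count (m+3) + t.count (m+3) = 2 := by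
      have h5 := congrArg (List.count (m+3)) hst
      rw [hcountB] at h5
      simp only [List.count_append] at h5
      omega
    have hts : t.count (m+3) = 0 := by omega
    have hss : s.count (m+3) = 0 := by omega
    have htsuf : t <:+ (Pw m ++ [m+3] ++ D ++ A) ++ [m+3] := by
      refine ⟨s ++ F, ?_⟩
      rw [← hst]
    have ht : t = [] := by
      rcases suffix_concat htsuf with h' | h'
      · exact h'
      · exact absurd h' (List.count_eq_zero.1 hts)
    subst ht
    rw [List.append_nil] at hst
    have hspre : s <+: Pw m ++ (m+3) :: (D ++ A ++ [m+3]) := by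
      refine ⟨F, ?_⟩
      rw [hst]; simp [List.append_assoc]
    have hsne : (m+3) ∉ s := List.count_eq_zero.1 hss
    obtain ⟨s₂, hs₂⟩ := prefix_split hspre hsne
    have hF2 : F = s₂ ++ [m+3] ++ D ++ A ++ [m+3] := by
      apply List.append_cancel_left (as := s)
      rw [hst, ← hs₂]
      simp [List.append_assoc]
    have hs₂suf : s₂ <:+ Pw m := ⟨s, hs₂⟩
    rcases suffix_Pw hs₂suf with ⟨j, hj, rfl⟩ | ⟨j, hj, rfl⟩
    · rcases Nat.eq_zero_or_pos j with rfl | hj1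
      · have h1 := heven 1
        rw [hF2] at h1
        simp only [List.count_append, count_Pw, hD, hA, count_rev_range_add, count_range_add,
          List.count_singleton, beq_iff_eq] at h1
        split_ifs at h1 <;> omega
      · have h1 := heven (j + 1)
        rw [hF2] at h1
        simp only [List.count_append, count_Pw, hD, hA, count_rev_range_add, count_range_add,
          List.count_singleton, beq_iff_eq] at h1
        split_ifs at h1 <;> omega
    · have h1 := heven (j + 2)
      rw [hF2] at h1
      simp only [List.count_append, List.count_cons, count_Pw, hD, hA, count_rev_range_add,
        count_range_add, List.count_singleton, beq_iff_eq] at h1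
      split_ifs at h1 <;> omega

/-- For `n > 2`, the word `W` has length `4n - 7`, is a word over the alphabet
`{1, …, n}`, contains no abelian square factor, and appending any letter of the
alphabet creates an abelian square factor.  Hence `W` is crucial w.r.t. the set
of abelian squares and `L_min(S_2^n) ≤ 4n - 7`. -/
theorem Wword_crucial (n : ℕ) (hn : 2 < n) :
    (Wword n).length = 4 * n - 7 ∧
    (∀ x ∈ Wword n, 1 ≤ x ∧ x ≤ n) ∧
    AbSqFree (Wword n) ∧
    (∀ a : ℕ, 1 ≤ a → a ≤ n →
      ∃ X Y : List ℕ, X ≠ [] ∧ Y ≠ [] ∧ (∀ c : ℕ, X.count c = Y.count c) ∧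
        (X ++ Y) <:+: (Wword n ++ [a])) := by
  obtain ⟨m, rfl⟩ : ∃ m, n = m + 3 := ⟨n - 3, by omega⟩
  refine ⟨?_, ?_, ?_, ?_⟩
  · rw [Wword_eq]
    simp [length_Pw]
    omega
  · intro x hx
    have h1 : 0 < (Wword (m+3)).count x := List.count_pos_iff.2 hx
    rw [Wword_eq] at h1
    simp only [List.count_append, count_Pw, count_rev_range_add, count_range_add,
      List.count_singleton, beq_iff_eq] at h1
    split_ifs at h1 <;> omega
  · intro X Y hX hY hcnt hinf
    refine key m (X ++ Y) (by simp [hX]) hinf (fun c => ?_)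
    have := hcnt c
    rw [List.count_append]
    omega
  · intro a ha1 ha2
    rcases Nat.lt_or_ge a (m + 3) with hlt | hge
    · -- a = l + 1 with l ≤ m + 1
      obtain ⟨l, rfl⟩ : ∃ l, a = l + 1 := ⟨a - 1, by omega⟩
      obtain ⟨d, hd⟩ : ∃ d, l + d = m + 1 := ⟨m + 1 - l, by omega⟩
      refine ⟨Pw l ++ [m + 3] ++ ((List.range d).map (fun x => x + (l + 1))).reverse,
        ((List.range l).reverse.map (fun j => j + 1)) ++ (List.range m).map (fun j => j + 2)
          ++ [m + 3, l + 1], by simp, by simp, ?_, ?_⟩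
      · intro c
        simp only [List.count_append, count_Pw, count_rev_range_add, count_range_add,
          List.count_reverse, List.count_singleton, List.count_cons, List.count_nil,
          beq_iff_eq]
        split_ifs <;> omega
      · obtain ⟨u, hu⟩ : Pw l <:+ Pw (m + 1) := Pw_suffix_Pw (by omega)
        refine ⟨u, [], ?_⟩
        rw [Wword_eq]
        rw [show (List.range (m + 1)).reverse.map (fun j => j + 1)
            = ((List.range d).map (fun x => x + (l + 1))).reverse
              ++ (List.range l).reverse.map (fun j => j + 1) by rw [← hd, D_split]]
        rw [← hu]
        simp [List.append_assoc]
    · -- a = m + 3 = n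
      have ha : a = m + 3 := by omega
      subst ha
      refine ⟨[m + 3], [m + 3], by simp, by simp, fun c => rfl, ?_⟩
      refine ⟨Pw (m+1) ++ [m+3] ++ ((List.range (m + 1)).reverse.map (fun j => j + 1))
        ++ ((List.range m).map (fun j => j + 2)), [], ?_⟩
      rw [Wword_eq]
      simp [List.append_assoc]
end

section
/- Let A be an alphabet with |A| = n ≥ 2 and fix k ≥ 1. Let S_3^{n,k} be the set of words XY with |X| = |Y| ≥ k+1 and Hamming distance d(X,Y) ≤ k. Then the minimal length of a crucial word with respect to S_3^{n,k} is 2k + 1, witnessed by the word p_1 p_2 ··· p_k x p_1 p_2 ··· p_k with x ≠ p_i for all i. -/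
/-!
Every word of `S_3^{n,k}` has length at least `2k + 2`, so a word of length at most `2k + 1`
is free from it, while a crucial word must acquire a factor of length `2k + 2` when a letter
is appended and hence has length at least `2k + 1`. Conversely, for `|u| = k`, appending `a`
to `u x u` gives `(u x)(u a)`, two halves of length `k + 1` at Hamming distance at most
`1 ≤ k`, so `u x u` is crucial.
-/

/-- The prohibition set `S_3^{n,k}`: all words `X ++ Y` with `|X| = |Y| ≥ k+1`
and Hamming distance `d(X,Y) ≤ k`. -/
def Proh (n k : ℕ) : Set (List (Fin n)) :=
  {w | ∃ X Y : List (Fin n), w = X ++ Y ∧ X.length = Y.length ∧ k + 1 ≤ X.length ∧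
        ((X.zip Y).countP fun p => p.1 != p.2) ≤ k}

/-- A word is free from `S_3^{n,k}` if it has no factor in `S_3^{n,k}`. -/
def FreeP (n k : ℕ) (w : List (Fin n)) : Prop :=
  ∀ v ∈ Proh n k, ¬ v <:+: w

/-- A word is crucial w.r.t. `S_3^{n,k}` if it is free from `S_3^{n,k}` but
appending any letter of the alphabet creates a prohibited factor. -/
def CrucialP (n k : ℕ) (w : List (Fin n)) : Prop :=
  FreeP n k w ∧ ∀ a : Fin n, ∃ v ∈ Proh n k, v <:+: (w ++ [a])

lemma List.countP_zip_self_bne {α : Type*} [DecidableEq α] (l : List α) :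
    (l.zip l).countP (fun p => p.1 != p.2) = 0 := by
  induction l with
  | nil => rfl
  | cons a t ih => simp [List.zip_cons_cons, ih]

lemma List.countP_zip_append_singleton_bne_le_one {α : Type*} [DecidableEq α]
    (l : List α) (x a : α) :
    ((l ++ [x]).zip (l ++ [a])).countP (fun p => p.1 != p.2) ≤ 1 := by
  rw [List.zip_append rfl, List.countP_append, List.countP_zip_self_bne]
  simp only [List.zip_cons_cons, List.zip_nil_left, List.countP_singleton]
  split <;> omega

lemma two_mul_add_two_le_length_of_mem_Proh {n k : ℕ} {v : List (Fin n)} (hv : v ∈ Proh n k) :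
    2 * k + 2 ≤ v.length := by
  obtain ⟨X, Y, rfl, hlen, hk, -⟩ := hv
  rw [List.length_append, ← hlen]
  omega

lemma freeP_of_length_le {n k : ℕ} {w : List (Fin n)} (hw : w.length ≤ 2 * k + 1) :
    FreeP n k w := by
  intro v hv hinf
  have := two_mul_add_two_le_length_of_mem_Proh hv
  have := hinf.length_le
  omega

lemma CrucialP.two_mul_add_one_le_length {n k : ℕ} {w : List (Fin n)} (hn : 0 < n)
    (hw : CrucialP n k w) : 2 * k + 1 ≤ w.length := by
  obtain ⟨v, hv, hinf⟩ := hw.2 ⟨0, hn⟩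
  have := two_mul_add_two_le_length_of_mem_Proh hv
  have := hinf.length_le
  simp only [List.length_append, List.length_singleton] at this
  omega

lemma crucialP_append_singleton_append {n k : ℕ} (hk : 1 ≤ k) {u : List (Fin n)}
    (hu : u.length = k) (x : Fin n) : CrucialP n k (u ++ [x] ++ u) := by
  refine ⟨freeP_of_length_le (by simp [hu]; omega), fun a => ?_⟩
  refine ⟨u ++ [x] ++ u ++ [a], ⟨u ++ [x], u ++ [a], by simp, by simp, by simp [hu], ?_⟩,
    List.infix_refl _⟩
  exact (List.countP_zip_append_singleton_bne_le_one u x a).trans hk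

/-- For an alphabet of size `n ≥ 2` and `k ≥ 1`, the minimal length of a
crucial word w.r.t. `S_3^{n,k}` is `2k + 1`, witnessed by the words
`p_1 ⋯ p_k x p_1 ⋯ p_k` with `x ≠ p_i` for all `i`. -/
theorem Lmin_hamming (n k : ℕ) (hn : 2 ≤ n) (hk : 1 ≤ k) :
    ((∃ w : List (Fin n), CrucialP n k w ∧ w.length = 2 * k + 1) ∧
     (∀ w : List (Fin n), CrucialP n k w → 2 * k + 1 ≤ w.length)) ∧
    (∀ (p : Fin k → Fin n) (x : Fin n), (∀ i : Fin k, x ≠ p i) →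
      CrucialP n k (List.ofFn p ++ [x] ++ List.ofFn p) ∧
        (List.ofFn p ++ [x] ++ List.ofFn p).length = 2 * k + 1) := by
  have hn₀ : 0 < n := by omega
  have h_witness (u : List (Fin n)) (hu : u.length = k) (x : Fin n) :
      CrucialP n k (u ++ [x] ++ u) ∧ (u ++ [x] ++ u).length = 2 * k + 1 :=
    ⟨crucialP_append_singleton_append hk hu x, by simp [hu]; omega⟩
  refine ⟨⟨⟨_, h_witness (List.replicate k ⟨0, hn₀⟩) (List.length_replicate ..) ⟨0, hn₀⟩⟩,
    fun w hw => hw.two_mul_add_one_le_length hn₀⟩, fun p x _ => h_witness _ (List.length_ofFn ..) x⟩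
end

section
/- Over the two-letter alphabet {1,2}, the word 1^{k+1} 2^{k+1} 1^{k+1} (of length 3k+3) contains no factor XY with |X| = |Y| ≥ k+1 and Hamming distance d(X,Y) ≤ k. -/
open List

theorem getElem_replicate_append_replicate_append_replicate {α : Type*} {a b c j : ℕ} {x y : α}
    (hj : j < (replicate a x ++ replicate b y ++ replicate c x).length) :
    (replicate a x ++ replicate b y ++ replicate c x)[j] =
      if a ≤ j ∧ j < a + b then y else x := by
  simp only [getElem_append, getElem_replicate, length_append, length_replicate]
  split_ifs <;> first | rfl | omega

theorem getElem_of_append_append_eq {α : Type*} {pre v suf w : List α} (hw : pre ++ v ++ suf = w)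
    {i : ℕ} (hi : i < v.length) :
    v[i] = w[pre.length + i]'(by rw [← hw]; simp; omega) := by
  subst hw
  simp [getElem_append_right, getElem_append_left, hi]

theorem countP_zip_ne_eq_count_add_count {X Y : List (Fin 2)} (hlen : X.length = Y.length)
    (h : ∀ i (hX : i < X.length) (hY : i < Y.length), X[i] = 1 → Y[i] ≠ 1) :
    (X.zip Y).countP (fun p => p.1 != p.2) = X.count 1 + Y.count 1 := by
  induction X generalizing Y with
  | nil => cases Y <;> simp_all
  | cons a X ih =>
    cases Y with
    | nil => simp at hlen
    | cons b Y =>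
      have hab : a = 1 → b ≠ 1 := h 0 (by simp) (by simp)
      have ih := ih (by simpa using hlen) fun i hX hY =>
        h (i + 1) (by simpa using hX) (by simpa using hY)
      simp only [zip_cons_cons, countP_cons, count_cons, ih]
      fin_cases a <;> fin_cases b <;> simp_all <;> omega

def blockWord (m : ℕ) : List (Fin 2) := replicate m 0 ++ replicate m 1 ++ replicate m 0

section BlockWord

variable {m : ℕ} {pre v X Y suf : List (Fin 2)}

theorem length_blockWord : (blockWord m).length = 3 * m := by
  simp only [blockWord, length_append, length_replicate]
  ring

theorem count_one_blockWord : (blockWord m).count 1 = m := by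
  simp [blockWord, count_replicate]

theorem getElem_blockWord_eq_one_iff {j : ℕ} (hj : j < (blockWord m).length) :
    (blockWord m)[j] = 1 ↔ m ≤ j ∧ j < 2 * m := by
  rw [show (blockWord m)[j] = _ from getElem_replicate_append_replicate_append_replicate hj]
  split_ifs with h <;> simp [two_mul, h]

theorem count_one_eq_zero_of_append_append_eq_blockWord (hw : pre ++ v ++ suf = blockWord m)
    (hv : pre.length + v.length ≤ m ∨ 2 * m ≤ pre.length) : v.count 1 = 0 := by
  refine count_eq_zero.2 fun h => ?_
  obtain ⟨j, hj, h1⟩ := mem_iff_getElem.1 h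
  rw [getElem_of_append_append_eq hw hj, getElem_blockWord_eq_one_iff] at h1
  omega

theorem count_one_eq_of_append_append_eq_blockWord (hw : pre ++ v ++ suf = blockWord m)
    (hpre : pre.length ≤ m) (hv : 2 * m ≤ pre.length + v.length) : v.count 1 = m := by
  have hpre_count : pre.count 1 = 0 :=
    count_one_eq_zero_of_append_append_eq_blockWord (pre := []) (by simpa using hw)
      (.inl (by simpa))
  have hsuf_count : suf.count 1 = 0 :=
    count_one_eq_zero_of_append_append_eq_blockWord (pre := pre ++ v) (suf := [])
      (by simpa using hw) (.inr (by simpa using hv))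
  simpa [count_append, hpre_count, hsuf_count, count_one_blockWord] using congrArg (count 1) hw

theorem getElem_ne_one_of_append_append_eq_blockWord (hw : pre ++ (X ++ Y) ++ suf = blockWord m)
    (hX : m ≤ X.length) (i : ℕ) (hiX : i < X.length) (hiY : i < Y.length) :
    X[i] = 1 → Y[i] ≠ 1 := by
  rw [getElem_of_append_append_eq (by simpa using hw) hiX, getElem_blockWord_eq_one_iff,
    getElem_of_append_append_eq (pre := pre ++ X) (by simpa using hw) hiY, Ne,
    getElem_blockWord_eq_one_iff, length_append]
  omega

end BlockWord

/-- Over the two-letter alphabet, the word `1^{k+1} 2^{k+1} 1^{k+1}` (with the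
letters `1`, `2` represented by `0`, `1 : Fin 2`) contains no factor
`X ++ Y` with `|X| = |Y| ≥ k+1` and `d(X,Y) ≤ k`. -/
theorem block_word_free (k : ℕ) :
    ∀ v ∈ Proh 2 k,
      ¬ v <:+: (List.replicate (k + 1) (0 : Fin 2) ++ List.replicate (k + 1) 1 ++
        List.replicate (k + 1) 0) := by
  rintro v ⟨X, Y, rfl, hlen, hk, hd⟩ ⟨pre, suf, hw⟩
  change _ = blockWord (k + 1) at hw
  have hlenW := congrArg length hw
  simp only [length_append, length_blockWord] at hlenW
  have hcount : (X ++ Y).count 1 = k + 1 :=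
    count_one_eq_of_append_append_eq_blockWord hw (by omega) (by simp only [length_append]; omega)
  rw [countP_zip_ne_eq_count_add_count hlen (getElem_ne_one_of_append_append_eq_blockWord hw hk),
    ← count_append, hcount] at hd
  omega
end

section
/- Over the two-letter alphabet {1,2}, the maximal length of a crucial word with respect to S_3^{2,k} equals 3k+3. -/
set_option maxHeartbeats 1000000

namespace LmaxAux

/-- index congruence for getElem -/
theorem gcongr {α : Type*} (w : List α) {i j : ℕ} (h : i = j) (hi : i < w.length) :
    w[i]'hi = w[j]'(h ▸ hi) := by subst h; rfl

/-- If `n` strictly increasing indices of `l` all satisfy `q`, then `countP q l ≥ n`. -/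
theorem countP_ge {α : Type*} (q : α → Bool) : ∀ (n : ℕ) (f : ℕ → ℕ) (l : List α),
    (∀ a b, a < b → b < n → f a < f b) →
    (∀ j, j < n → ∃ h : f j < l.length, q (l[f j]'h) = true) →
    n ≤ l.countP q := by
  intro n
  induction n with
  | zero => intro f l _ _; exact Nat.zero_le _
  | succ n ih =>
    intro f l hmono hq
    obtain ⟨h0, hq0⟩ := hq 0 (Nat.succ_pos n)
    have hdrop : l.drop (f 0) = l[f 0] :: l.drop (f 0 + 1) := List.drop_eq_getElem_cons h0
    have hsub : (l.drop (f 0)).countP q ≤ l.countP q :=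
      (List.drop_sublist _ _).countP_le
    have htail : n ≤ (l.drop (f 0 + 1)).countP q := by
      apply ih (fun j => f (j + 1) - (f 0 + 1))
      · intro a b hab hbn
        have h1 : f 0 < f (a + 1) := hmono 0 (a + 1) (Nat.succ_pos a) (by omega)
        have h2 : f (a + 1) < f (b + 1) := hmono (a + 1) (b + 1) (by omega) (by omega)
        omega
      · intro j hj
        have h1 : f 0 < f (j + 1) := hmono 0 (j + 1) (Nat.succ_pos j) (by omega)
        obtain ⟨hlt, hqj⟩ := hq (j + 1) (by omega)
        have hlen : f (j + 1) - (f 0 + 1) < (l.drop (f 0 + 1)).length := by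
          simp only [List.length_drop]; omega
        refine ⟨hlen, ?_⟩
        have he : (l.drop (f 0 + 1))[f (j + 1) - (f 0 + 1)]'hlen = l[f (j + 1)]'hlt := by
          rw [List.getElem_drop]
          exact gcongr l (by omega) _
        rw [he]; exact hqj
    calc n + 1 ≤ (l.drop (f 0)).countP q := by
          rw [hdrop, List.countP_cons_of_pos hq0]; omega
      _ ≤ l.countP q := hsub

theorem countP_not {α : Type*} (p : α → Bool) (l : List α) :
    l.countP p + l.countP (fun a => !p a) = l.length := by
  induction l with
  | nil => simp
  | cons a l ih =>
    by_cases h : p a <;> simp [List.countP_cons, h] <;> omega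

/-- Applying freeness to the factor of length `2m` starting at `i`. -/
theorem free_apply {k : ℕ} {w : List (Fin 2)} (hf : FreeP 2 k w) {i m : ℕ}
    (hm : k + 1 ≤ m) (hL : i + (m + m) ≤ w.length) :
    k + 1 ≤ (((w.drop i).take m).zip ((w.drop (i + m)).take m)).countP
      (fun p => p.1 != p.2) := by
  by_contra hcon
  push_neg at hcon
  apply hf (((w.drop i).take m) ++ ((w.drop (i + m)).take m))
  · refine ⟨_, _, rfl, ?_, ?_, by omega⟩
    · simp only [List.length_take, List.length_drop]; omega
    · simp only [List.length_take, List.length_drop]; omega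
  · have h2 : (w.drop i).drop m = w.drop (i + m) := by rw [List.drop_drop]
    have h1 : (w.drop i).take (m + m)
        = ((w.drop i).take m) ++ ((w.drop (i + m)).take m) := by
      rw [List.take_add, h2]
    rw [← h1]
    exact ((w.drop i).take_prefix (m + m)).isInfix.trans (w.drop_suffix i).isInfix

theorem zip_pair (w : List (Fin 2)) (i m j : ℕ) (hj : j < m)
    (hL : i + (m + m) ≤ w.length) :
    ∃ hz : j < (((w.drop i).take m).zip ((w.drop (i + m)).take m)).length,
      (((w.drop i).take m).zip ((w.drop (i + m)).take m))[j]'hz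
        = (w[i + j]'(by omega), w[i + m + j]'(by omega)) := by
  have hz : j < (((w.drop i).take m).zip ((w.drop (i + m)).take m)).length := by
    simp only [List.length_zip, List.length_take, List.length_drop]; omega
  refine ⟨hz, ?_⟩
  rw [List.getElem_zip, List.getElem_take, List.getElem_take, List.getElem_drop,
    List.getElem_drop]

theorem zip_len (w : List (Fin 2)) (i m : ℕ) (hL : i + (m + m) ≤ w.length) :
    (((w.drop i).take m).zip ((w.drop (i + m)).take m)).length = m := by
  simp only [List.length_zip, List.length_take, List.length_drop]; omega

/-- Anti-periodicity of free words: letters at distance `k+1` differ. -/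
theorem stepA {k : ℕ} {w : List (Fin 2)} (hf : FreeP 2 k w) (t : ℕ)
    (hL : 2 * k + 2 ≤ w.length) (ht : t + (k + 1) < w.length) :
    w[t]'(by omega) ≠ w[t + (k + 1)]'ht := by
  set i := min t (w.length - (2 * k + 2)) with hi
  have h1 : i + ((k + 1) + (k + 1)) ≤ w.length := by omega
  have h2 : t - i < k + 1 := by omega
  have hc := free_apply hf (le_refl (k + 1)) h1
  have hlen := zip_len w i (k + 1) h1
  have hcl : (((w.drop i).take (k+1)).zip ((w.drop (i + (k+1))).take (k+1))).countP
      (fun p => p.1 != p.2) = (((w.drop i).take (k+1)).zip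
      ((w.drop (i + (k+1))).take (k+1))).length := by
    have := List.countP_le_length (p := fun p : Fin 2 × Fin 2 => p.1 != p.2)
      (l := ((w.drop i).take (k+1)).zip ((w.drop (i + (k+1))).take (k+1)))
    omega
  have hall := List.countP_eq_length.mp hcl
  obtain ⟨hz, hpair⟩ := zip_pair w i (k + 1) (t - i) h2 h1
  have hmem := List.getElem_mem hz
  rw [hpair] at hmem
  have hbne := hall _ hmem
  simp only [bne_iff_ne, ne_eq] at hbne
  intro heq
  exact hbne ((gcongr w (show i + (t - i) = t by omega) (by omega)).trans
    (heq.trans (gcongr w (show t + (k + 1) = i + (k + 1) + (t - i) by omega) ht)))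

/-- Every free word over the binary alphabet has length at most `3k+3`. -/
theorem free_length {k : ℕ} {w : List (Fin 2)} (hf : FreeP 2 k w) :
    w.length ≤ 3 * k + 3 := by
  by_contra hcon
  push_neg at hcon
  have hL : 3 * k + 4 ≤ w.length := hcon
  have fin2 : ∀ a b c : Fin 2, a ≠ b → c ≠ b → a = c := by decide
  have hex : ∃ t, ∃ _ : t ≤ k, (w[t]'(by omega) ≠ w[t + 1]'(by omega)) := by
    by_contra h
    push_neg at h
    have hconst : ∀ s, ∀ _ : s ≤ k + 1, w[s]'(by omega) = w[0]'(by omega) := by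
      intro s
      induction s with
      | zero => intro _; rfl
      | succ n ihn =>
        intro hs
        have hn := h n (by omega)
        rw [← hn, ihn (by omega)]
    have h0 := stepA hf 0 (by omega) (by omega)
    exact h0 ((hconst (k + 1) le_rfl).symm.trans
      (gcongr w (show k + 1 = 0 + (k + 1) by omega) (by omega)))
  obtain ⟨t, htk, hne⟩ := hex
  have e1 : w[t + (k + 2)]'(by omega) = w[t]'(by omega) := by
    have h2 := stepA hf (t + 1) (by omega) (by omega)
    refine fin2 _ _ _ ?_ hne
    intro hq
    exact h2 (hq.symm.trans (gcongr w (show t + (k + 2) = t + 1 + (k + 1) by omega) (by omega)))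
  have ha := stepA hf t (by omega) (by omega)
  have e2 : w[t + (k + 1)]'(by omega) = w[t + (2 * k + 3)]'(by omega) := by
    have hb := stepA hf (t + (k + 2)) (by omega) (by omega)
    refine fin2 _ _ _ (fun hq => ha hq.symm) ?_
    intro hq
    exact hb (e1.trans (hq.symm.trans
      (gcongr w (show t + (2 * k + 3) = t + (k + 2) + (k + 1) by omega) (by omega))))
  have hLL : t + ((k + 2) + (k + 2)) ≤ w.length := by omega
  have hc := free_apply hf (show k + 1 ≤ k + 2 by omega) hLL
  have hlenZ := zip_len w t (k + 2) hLL
  have hq2 : 2 ≤ (((w.drop t).take (k+2)).zip ((w.drop (t + (k+2))).take (k+2))).countP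
      (fun p => !(p.1 != p.2)) := by
    apply countP_ge _ 2 (fun j => k * j + j)
    · intro a b hab hb2
      have ha0 : a = 0 := by omega
      have hb1 : b = 1 := by omega
      subst ha0; subst hb1
      simp only [Nat.mul_zero, Nat.add_zero, Nat.mul_one]
      omega
    · intro j hj2
      rcases j with _ | _ | j
      · -- j = 0, index k*0+0 = 0
        simp only [Nat.mul_zero, Nat.add_zero]
        obtain ⟨hz, hpair⟩ := zip_pair w t (k + 2) 0 (by omega) hLL
        refine ⟨hz, ?_⟩
        rw [hpair]
        simp only [Bool.not_eq_true', bne_eq_false_iff_eq]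
        exact (gcongr w (show t + 0 = t by omega) (by omega)).trans
          (e1.symm.trans (gcongr w (show t + (k + 2) = t + (k + 2) + 0 by omega) (by omega)))
      · -- j = 1, index k*1+1 = k+1
        rw [show k * (0 + 1) + (0 + 1) = k + 1 from by ring]
        obtain ⟨hz, hpair⟩ := zip_pair w t (k + 2) (k + 1) (by omega) hLL
        have hgoal : (!((((w.drop t).take (k+2)).zip
              ((w.drop (t + (k+2))).take (k+2)))[k+1]'hz).1 !=
            ((((w.drop t).take (k+2)).zip
              ((w.drop (t + (k+2))).take (k+2)))[k+1]'hz).2) = true := by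
          rw [hpair]
          simp only [Bool.not_eq_true', bne_eq_false_iff_eq]
          exact e2.trans
            (gcongr w (show t + (2 * k + 3) = t + (k + 2) + (k + 1) by omega) (by omega))
        exact ⟨hz, hgoal⟩
      · exact absurd hj2 (by omega)
  have hsum := countP_not (fun p : Fin 2 × Fin 2 => p.1 != p.2)
    (((w.drop t).take (k+2)).zip ((w.drop (t + (k+2))).take (k+2)))
  omega

/-- The witness word `0^{k+1} 1^{k+1} 0^{k+1}`. -/
def wit (k : ℕ) : List (Fin 2) :=
  List.ofFn (fun s : Fin (3 * k + 3) => if k + 1 ≤ (s : ℕ) ∧ (s : ℕ) < 2 * k + 2 then 1 else 0)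

theorem wit_length (k : ℕ) : (wit k).length = 3 * k + 3 := by
  simp only [wit, List.length_ofFn]

theorem wit_get (k s : ℕ) (hs : s < (wit k).length) :
    (wit k)[s]'hs = if k + 1 ≤ s ∧ s < 2 * k + 2 then 1 else 0 := by
  simp only [wit] at hs ⊢
  rw [List.getElem_ofFn]

theorem wit_free (k : ℕ) : FreeP 2 k (wit k) := by
  rintro v ⟨X, Y, rfl, hlen, hkX, hd⟩ ⟨s, t', hst⟩
  have hlens : s.length + (X.length + Y.length + t'.length) = 3 * k + 3 := by
    have h := congrArg List.length hst
    simp only [List.length_append, wit_length] at h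
    omega
  have hX : X = ((wit k).drop s.length).take X.length := by
    rw [← hst, List.append_assoc, List.drop_left,
      show X ++ Y ++ t' = X ++ (Y ++ t') by simp, List.take_left]
  have hY : Y = ((wit k).drop (s.length + X.length)).take X.length := by
    rw [← hst,
      show s ++ (X ++ Y) ++ t' = (s ++ X) ++ (Y ++ t') by simp,
      show s.length + X.length = (s ++ X).length by simp,
      List.drop_left, hlen, List.take_left]
  have hcount : k + 1 ≤ ((X.zip Y).countP fun p => p.1 != p.2) := by
    rw [hX, hY]
    apply countP_ge _ (k + 1)
      (fun j => if j < 2 * k + 2 - (s.length + X.length) then j else j + (X.length - (k + 1)))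
    · intro a b hab hb
      split_ifs <;> omega
    · intro j hj
      by_cases hjc : j < 2 * k + 2 - (s.length + X.length)
      · simp only [if_pos hjc]
        obtain ⟨hz, hpair⟩ := zip_pair (wit k) s.length X.length j (by omega)
          (by rw [wit_length]; omega)
        refine ⟨hz, ?_⟩
        rw [hpair, wit_get k (s.length + j) (by rw [wit_length]; omega),
          wit_get k (s.length + X.length + j) (by rw [wit_length]; omega),
          if_neg (by omega), if_pos (by omega)]
        decide
      · simp only [if_neg hjc]
        have hfm : j + (X.length - (k + 1)) < X.length := by omega
        obtain ⟨hz, hpair⟩ := zip_pair (wit k) s.length X.length (j + (X.length - (k + 1))) hfm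
          (by rw [wit_length]; omega)
        refine ⟨hz, ?_⟩
        rw [hpair, wit_get k (s.length + (j + (X.length - (k + 1))))
            (by rw [wit_length]; omega),
          wit_get k (s.length + X.length + (j + (X.length - (k + 1))))
            (by rw [wit_length]; omega),
          if_pos (by omega), if_neg (by omega)]
        decide
  omega

theorem not_free_long {k : ℕ} {w : List (Fin 2)} (h : 3 * k + 3 < w.length) :
    ∃ v ∈ Proh 2 k, v <:+: w := by
  by_contra hcon
  push_neg at hcon
  have hfree : FreeP 2 k w := fun v hv => hcon v hv
  have := free_length hfree
  omega

end LmaxAux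

/-- Over the two-letter alphabet, the maximal length of a crucial word w.r.t.
`S_3^{2,k}` equals `3k + 3`; in particular every crucial word of length
exceeding `3k + 3` would contain a prohibited factor of length `2k + 4`. -/
theorem Lmax_binary (k : ℕ) :
    (∃ w : List (Fin 2), CrucialP 2 k w ∧ w.length = 3 * k + 3) ∧
    (∀ w : List (Fin 2), CrucialP 2 k w → w.length ≤ 3 * k + 3) ∧
    (∀ w : List (Fin 2), 3 * k + 3 < w.length → CrucialP 2 k w →
      ∃ v ∈ Proh 2 k, v.length = 2 * k + 4 ∧ v <:+: w) := by
  refine ⟨⟨LmaxAux.wit k, ⟨LmaxAux.wit_free k, ?_⟩, LmaxAux.wit_length k⟩, ?_, ?_⟩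
  · intro a
    apply LmaxAux.not_free_long
    simp [LmaxAux.wit_length]
  · intro w hw
    exact LmaxAux.free_length hw.1
  · intro w hlen hw
    exact absurd (LmaxAux.free_length hw.1) (by omega)
end

section
/- Let A = {1,2,3} and k ≥ 1. Then S_3^{3,k} = { XY : |X| = |Y| ≥ k+1, d(X,Y) ≤ k } is incomplete: there exist words over {1,2,3} of arbitrarily large length containing no factor from S_3^{3,k}. (A witness is obtained by replacing each letter a, b, c of an infinite square-free word over a three-letter alphabet by the blocks 1^{k+1}, 2^{k+1}, 3^{k+1} respectively.) -/
def tm (n : ℕ) : Bool :=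
  if h : n = 0 then false
  else if n % 2 = 0 then tm (n / 2) else !tm (n / 2)
decreasing_by all_goals exact Nat.div_lt_self (Nat.pos_of_ne_zero h) one_lt_two

lemma tm_even (a : ℕ) : tm (2 * a) = tm a := by
  rcases Nat.eq_zero_or_pos a with rfl | ha
  · rfl
  · rw [tm]
    simp [Nat.mul_ne_zero, (by omega : 2 * a ≠ 0), Nat.mul_mod_right,
      Nat.mul_div_cancel_left _ (by norm_num : 0 < 2)]
    intro _; omega

lemma tm_odd (a : ℕ) : tm (2 * a + 1) = !tm a := by
  rw [tm]
  simp [Nat.mul_add_mod, Nat.mul_add_div (by norm_num : 0 < 2) a 1]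

lemma noThree (n : ℕ) : ¬ (tm n = tm (n+1) ∧ tm (n+1) = tm (n+2)) := by
  rintro ⟨h1, h2⟩
  rcases Nat.even_or_odd n with ⟨a, rfl⟩ | ⟨a, rfl⟩
  · rw [(by ring : a + a = 2 * a), (by ring : 2*a + 1 = 2*a + 1)] at h1
    rw [tm_even, tm_odd] at h1
    simp at h1
  · rw [(by ring : 2*a+1+1 = 2*(a+1)), (by ring : 2*a+1+2 = 2*(a+1)+1)] at h2
    rw [tm_even, tm_odd] at h2
    simp at h2

lemma rel1 (u y : ℕ) (h1 : tm (2*y) = tm (2*y + (2*u+1)))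
    (h2 : tm (2*y+1) = tm (2*y + (2*u+1) + 1)) : tm (y+u) = tm (y+u+1) := by
  rw [show 2*y + (2*u+1) = 2*(y+u)+1 by ring] at h1
  rw [show 2*y + (2*u+1) + 1 = 2*(y+u+1) by ring] at h2
  rw [tm_even, tm_odd] at h1
  rw [tm_odd, tm_even] at h2
  rcases Bool.dichotomy (tm y) with hy | hy <;> rw [hy] at h1 h2 <;> simp_all

lemma rel2 (u z : ℕ) (h1 : tm (2*z+1) = tm (2*z+1 + (2*u+1)))
    (h2 : tm (2*z+2) = tm (2*z+2 + (2*u+1))) : tm z = tm (z+1) := by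
  rw [show 2*z+1 + (2*u+1) = 2*(z+u+1) by ring] at h1
  rw [show 2*z+2 = 2*(z+1) by ring, show 2*(z+1) + (2*u+1) = 2*(z+u+1)+1 by ring] at h2
  rw [tm_odd, tm_even] at h1
  rw [tm_even, tm_odd] at h2
  rcases Bool.dichotomy (tm z) with hz | hz <;> simp_all

/-- Thue–Morse has no "bordered squares": no `t ≥ 1, j` with
`tm (j+i) = tm (j+t+i)` for all `i ≤ t`. -/
lemma tmA : ∀ t, 1 ≤ t → ∀ j, ¬ (∀ i, i ≤ t → tm (j+i) = tm (j+t+i)) := by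
  intro t
  induction t using Nat.strong_induction_on with
  | _ t IH =>
    intro ht j hA
    rcases Nat.even_or_odd t with ⟨u, rfl⟩ | ⟨u, rfl⟩
    · -- t = u + u, even, u ≥ 1
      have hu : 1 ≤ u := by omega
      rcases Nat.even_or_odd j with ⟨h, rfl⟩ | ⟨h, rfl⟩
      · refine IH u (by omega) hu h (fun l hl => ?_)
        have := hA (2*l) (by omega)
        rw [show h+h+2*l = 2*(h+l) by ring, show h+h+(u+u)+2*l = 2*(h+u+l) by ring,
          tm_even, tm_even] at this
        rw [show h + u + l = h + (u + l) by ring] at this ⊢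
        exact this
      · refine IH u (by omega) hu h (fun l hl => ?_)
        have := hA (2*l) (by omega)
        rw [show 2*h+1+2*l = 2*(h+l)+1 by ring, show 2*h+1+(u+u)+2*l = 2*(h+u+l)+1 by ring,
          tm_odd, tm_odd] at this
        simp only [Bool.not_inj_iff] at this
        rw [show h + u + l = h + (u + l) by ring] at this ⊢
        exact this
    · -- t = 2u+1 odd
      rcases Nat.eq_zero_or_pos u with rfl | hu
      · -- t = 1
        have e0 := hA 0 (by omega)
        have e1 := hA 1 (by omega)
        simp only [Nat.add_zero] at e0
        exact noThree j ⟨by simpa using e0, by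
          rw [show j+1 = j + (2*0+1) + 0 by ring, show j+2 = j + (2*0+1) + 1 by ring]
          exact e1⟩
      · -- t = 2u+1 ≥ 3
        rcases Nat.even_or_odd j with ⟨h, rfl⟩ | ⟨h, rfl⟩
        · have p1 : tm (h+u) = tm (h+u+1) := by
            apply rel1 u h
            · have := hA 0 (by omega); convert this using 2 <;> ring
            · have := hA 1 (by omega); convert this using 2 <;> ring
          have p2 : tm (h+u+1) = tm (h+u+2) := by
            have := rel1 u (h+1) ?_ ?_
            · rw [show h+u+1 = h+1+u by ring, show h+u+2 = h+1+u+1 by ring]; exact this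
            · have := hA 2 (by omega); convert this using 2 <;> ring
            · have := hA 3 (by omega); convert this using 2 <;> ring
          exact noThree (h+u) ⟨p1, p2⟩
        · have p1 : tm (h+u) = tm (h+u+1) := by
            apply rel2 u (h+u)
            · have := hA (2*u) (by omega); convert this using 2 <;> ring
            · have := hA (2*u+1) (by omega); convert this using 2 <;> ring
          have p2 : tm (h+u+1) = tm (h+u+2) := by
            have := rel1 u (h+1) ?_ ?_
            · rw [show h+u+1 = h+1+u by ring, show h+u+2 = h+1+u+1 by ring]; exact this
            · have := hA 1 (by omega); convert this using 2 <;> ring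
            · have := hA 2 (by omega); convert this using 2 <;> ring
          exact noThree (h+u) ⟨p1, p2⟩

noncomputable def cw (n : ℕ) : Fin 3 := if tm n = tm (n+1) then 1 else if tm n then 0 else 2

lemma cw_eq (x y : ℕ) (h : cw x = cw y) :
    (tm x = tm y → tm (x+1) = tm (y+1)) ∧
    (tm x ≠ tm y → (tm (x+1) = tm x ∧ tm (y+1) = tm y)) := by
  unfold cw at h
  rcases Bool.dichotomy (tm x) with h1|h1 <;> rcases Bool.dichotomy (tm (x+1)) with h2|h2 <;>
  rcases Bool.dichotomy (tm y) with h3|h3 <;> rcases Bool.dichotomy (tm (y+1)) with h4|h4 <;>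
    simp_all

/-- The word `cw` is squarefree. -/
lemma cw_sf : ∀ τ, 1 ≤ τ → ∀ j, ∃ i, i < τ ∧ cw (j+i) ≠ cw (j+i+τ) := by
  intro τ hτ j
  by_contra hc
  push_neg at hc
  by_cases h0 : tm j = tm (j+τ)
  · apply tmA τ hτ j
    intro i hi
    induction i with
    | zero => convert h0 using 2 <;> omega
    | succ n ihn =>
      have hcn := hc n (by omega)
      have step := (cw_eq _ _ hcn).1 (by
        have := ihn (by omega); convert this using 2 <;> omega)
      convert step using 2 <;> omega
  · have key : ∀ i, i ≤ τ → tm (j+i) = tm j ∧ tm (j+i) ≠ tm (j+i+τ) := by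
      intro i hi
      induction i with
      | zero => refine ⟨rfl, ?_⟩; intro hcon; apply h0; convert hcon using 2 <;> omega
      | succ n ihn =>
        obtain ⟨e1, e2⟩ := ihn (by omega)
        have hcn := hc n (by omega)
        obtain ⟨s1, s2⟩ := (cw_eq _ _ hcn).2 e2
        constructor
        · rw [show j+(n+1) = j+n+1 by ring, s1, e1]
        · intro hcon
          apply e2
          have A : tm (j+(n+1)) = tm (j+n) := by rw [show j+(n+1) = j+n+1 by ring, s1]
          have B : tm (j+(n+1)+τ) = tm (j+n+τ) := by
            rw [show j+(n+1)+τ = j+n+τ+1 by ring, s2]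
          rw [A, B] at hcon
          exact hcon
    have := (key τ le_rfl).1
    exact h0 this.symm


section Main
variable (c : ℕ → Fin 3) (q p m t r : ℕ)

def mset : Finset ℕ := (Finset.range m).filter fun i => c ((p+i)/q) ≠ c ((p+i+m)/q)

lemma lemA (hq : 1 ≤ q) (hmt : m = q*t + r) (hr : r < q) (i j : ℕ)
    (him : i < m) (h1 : q*j ≤ p+i) (h2 : p+i+r < q*(j+1)) (hG : c j ≠ c (j+t)) :
    i ∈ mset c q p m := by
  rw [mset, Finset.mem_filter, Finset.mem_range]
  refine ⟨him, ?_⟩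
  have c1 : j*q = q*j := by ring
  have c2 : (j+1)*q = q*(j+1) := by ring
  have e1 : (p+i)/q = j := Nat.div_eq_of_lt_le (by omega) (by omega)
  have e2 : (p+i+m)/q = j + t := by
    rw [show p+i+m = (p+i+r) + q*t by omega, Nat.add_mul_div_left _ _ (by omega : 0 < q)]
    have e3 : (p+i+r)/q = j := Nat.div_eq_of_lt_le (by omega) (by omega)
    omega
  rw [e1, e2]; exact hG

lemma lemB (hq : 1 ≤ q) (hmt : m = q*t + r) (hr : r < q) (i j : ℕ)
    (him : i < m) (h1 : q*j ≤ p+i) (h2 : p+i < q*(j+1)) (h3 : q*(j+1) ≤ p+i+r)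
    (hG : c j ≠ c (j+t+1)) :
    i ∈ mset c q p m := by
  rw [mset, Finset.mem_filter, Finset.mem_range]
  refine ⟨him, ?_⟩
  have c1 : j*q = q*j := by ring
  have c2 : (j+1)*q = q*(j+1) := by ring
  have c3 : (j+1+1)*q = q*(j+1) + q := by ring
  have e1 : (p+i)/q = j := Nat.div_eq_of_lt_le (by omega) (by omega)
  have e2 : (p+i+m)/q = j + 1 + t := by
    rw [show p+i+m = (p+i+r) + q*t by omega, Nat.add_mul_div_left _ _ (by omega : 0 < q)]
    have e3 : (p+i+r)/q = j+1 := Nat.div_eq_of_lt_le (by omega) (by omega)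
    omega
  rw [e1, e2, show j+1+t = j+t+1 by ring]; exact hG

lemma subA (hq : 1 ≤ q) (hmt : m = q*t + r) (hr : r < q) (j : ℕ) (hG : c j ≠ c (j+t)) :
    Finset.Ico (q*j - p) (min (q*j + (q-r)) (p+m) - p) ⊆ mset c q p m := by
  intro i hi
  rw [Finset.mem_Ico] at hi
  obtain ⟨ha, hb⟩ := hi
  have e : q*(j+1) = q*j + q := by ring
  exact lemA c q p m t r hq hmt hr i j (by omega) (by omega) (by omega) hG

lemma subB (hq : 1 ≤ q) (hmt : m = q*t + r) (hr : r < q) (j : ℕ)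
    (hD : p ≤ q*j + (q-r) ∨ q*(j+1) ≤ p + r) (hG : c j ≠ c (j+t+1)) :
    Finset.Ico (q*j + (q-r) - p) (min (q*(j+1)) (p+m) - p) ⊆ mset c q p m := by
  intro i hi
  rw [Finset.mem_Ico] at hi
  obtain ⟨ha, hb⟩ := hi
  have e : q*(j+1) = q*j + q := by ring
  exact lemB c q p m t r hq hmt hr i j (by omega) (by omega) (by omega) (by omega) hG

end Main

lemma card_four (S : Finset ℕ) (a1 b1 a2 b2 a3 b3 a4 b4 : ℕ)
    (s1 : Finset.Ico a1 b1 ⊆ S) (s2 : Finset.Ico a2 b2 ⊆ S)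
    (s3 : Finset.Ico a3 b3 ⊆ S) (s4 : Finset.Ico a4 b4 ⊆ S)
    (o1 : b1 ≤ a2) (o2 : b2 ≤ a3) (o2' : b1 ≤ a3) (o3 : b3 ≤ a4) (o3' : b2 ≤ a4)
    (o3'' : b1 ≤ a4) :
    (b1 - a1) + (b2 - a2) + (b3 - a3) + (b4 - a4) ≤ S.card := by
  classical
  have d12 : Disjoint (Finset.Ico a1 b1) (Finset.Ico a2 b2) := by
    rw [Finset.disjoint_left]; intro x hx hy
    rw [Finset.mem_Ico] at hx hy; omega
  have d3 : Disjoint (Finset.Ico a1 b1 ∪ Finset.Ico a2 b2) (Finset.Ico a3 b3) := by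
    rw [Finset.disjoint_left]; intro x hx hy
    rw [Finset.mem_union, Finset.mem_Ico, Finset.mem_Ico] at hx
    rw [Finset.mem_Ico] at hy; omega
  have d4 : Disjoint (Finset.Ico a1 b1 ∪ Finset.Ico a2 b2 ∪ Finset.Ico a3 b3)
      (Finset.Ico a4 b4) := by
    rw [Finset.disjoint_left]; intro x hx hy
    simp only [Finset.mem_union, Finset.mem_Ico] at hx
    rw [Finset.mem_Ico] at hy; omega
  have hsub : Finset.Ico a1 b1 ∪ Finset.Ico a2 b2 ∪ Finset.Ico a3 b3 ∪ Finset.Ico a4 b4 ⊆ S := by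
    intro x hx
    simp only [Finset.mem_union] at hx
    rcases hx with ((h|h)|h)|h
    exacts [s1 h, s2 h, s3 h, s4 h]
  calc (b1 - a1) + (b2 - a2) + (b3 - a3) + (b4 - a4)
      = (Finset.Ico a1 b1 ∪ Finset.Ico a2 b2 ∪ Finset.Ico a3 b3 ∪ Finset.Ico a4 b4).card := by
        rw [Finset.card_union_of_disjoint d4, Finset.card_union_of_disjoint d3,
          Finset.card_union_of_disjoint d12, Nat.card_Ico, Nat.card_Ico, Nat.card_Ico,
          Nat.card_Ico]
    _ ≤ S.card := Finset.card_le_card hsub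

set_option maxHeartbeats 2000000 in
lemma main_norm (c : ℕ → Fin 3)
    (hsf : ∀ τ, 1 ≤ τ → ∀ j, ∃ i, i < τ ∧ c (j+i) ≠ c (j+i+τ))
    (q p m : ℕ) (hq : 1 ≤ q) (hm : q ≤ m) (hp : p < q) :
    q ≤ (mset c q p m).card := by
  obtain ⟨t, r, hmt, hr, ht⟩ : ∃ t r, m = q*t + r ∧ r < q ∧ 1 ≤ t := by
    refine ⟨m/q, m%q, (Nat.div_add_mod m q).symm, Nat.mod_lt _ (by omega), ?_⟩
    rw [Nat.le_div_iff_mul_le (by omega)]; omega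
  have hadj : ∀ n, c n ≠ c (n+1) := by
    intro n
    obtain ⟨i, hi, hne⟩ := hsf 1 le_rfl n
    have : i = 0 := by omega
    subst this
    simpa using hne
  have e0 : q*0 = 0 := by ring
  have e1 : q*1 = q := by ring
  have e2 : q*2 = q+q := by ring
  have e3 : q*3 = q+q+q := by ring
  have et1 : q*(t+1) = q*t+q := by ring
  have et2 : q*(t+1+1) = q*t+q+q := by ring
  rcases Nat.eq_zero_or_pos r with hr0 | hr1
  · -- r = 0 : column argument
    subst hr0
    obtain ⟨d0, hd0, hne0⟩ := hsf t ht 0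
    obtain ⟨d1, hd1, hne1⟩ := hsf t ht 1
    simp only [Nat.zero_add] at hne0
    have hmul0 : q*(d0+1) ≤ q*t := Nat.mul_le_mul_left q (by omega)
    have hmul1 : q*(d1+1+1) ≤ q*(t+1) := Nat.mul_le_mul_left q (by omega)
    have em0 : q*(d0+1) = q*d0 + q := by ring
    have em1 : q*(d1+1+1) = q*d1 + q + q := by ring
    have em2 : q*(1+d1) = q + q*d1 := by ring
    have em3 : q*(1+d1+1) = q + q*d1 + q := by ring
    have hcard : (Finset.range q).card = q := Finset.card_range q
    apply le_trans (le_of_eq hcard.symm)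
    apply Finset.card_le_card_of_injOn
      (fun ρ => if ρ < p then q + ρ + q*d1 - p else ρ + q*d0 - p)
    · intro ρ hρ
      rw [Finset.mem_coe, Finset.mem_range] at hρ; rw [Finset.mem_coe]
      by_cases hc : ρ < p
      · simp only [hc, if_true]
        apply lemA c q p m t 0 hq hmt hr _ (1+d1) (by omega) (by omega) (by omega)
        exact hne1
      · simp only [hc, if_false]
        apply lemA c q p m t 0 hq hmt hr _ d0 (by omega) (by omega) (by omega)
        exact hne0
    · intro ρ1 h1 ρ2 h2 heq
      simp only [Finset.coe_range, Set.mem_Iio] at h1 h2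
      by_cases c1 : ρ1 < p <;> by_cases c2 : ρ2 < p <;>
        simp only [c1, c2, if_true, if_false] at heq
      · omega
      · have E : q + ρ1 + q*d1 = ρ2 + q*d0 := by omega
        have me1 : (q + ρ1 + q*d1) % q = ρ1 := by
          rw [show q + ρ1 + q*d1 = ρ1 + (1+d1)*q by ring, Nat.add_mul_mod_self_right]
          exact Nat.mod_eq_of_lt h1
        have me2 : (ρ2 + q*d0) % q = ρ2 := by
          rw [show ρ2 + q*d0 = ρ2 + d0*q by ring, Nat.add_mul_mod_self_right]
          exact Nat.mod_eq_of_lt h2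
        rw [← me1, ← me2, E]
      · have E : ρ1 + q*d0 = q + ρ2 + q*d1 := by omega
        have me1 : (ρ1 + q*d0) % q = ρ1 := by
          rw [show ρ1 + q*d0 = ρ1 + d0*q by ring, Nat.add_mul_mod_self_right]
          exact Nat.mod_eq_of_lt h1
        have me2 : (q + ρ2 + q*d1) % q = ρ2 := by
          rw [show q + ρ2 + q*d1 = ρ2 + (1+d1)*q by ring, Nat.add_mul_mod_self_right]
          exact Nat.mod_eq_of_lt h2
        rw [← me1, ← me2, E]
      · omega
  · -- r ≥ 1
    rcases Nat.lt_or_ge 1 t with ht2 | ht1'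
    · -- t ≥ 2
      have hq2 : q*2 ≤ q*t := Nat.mul_le_mul_left q (by omega)
      by_cases hAex : ∃ j, 1 ≤ j ∧ q*(j+1) ≤ p+m ∧ c j ≠ c (j+t)
      · by_cases hBex : ∃ j, 1 ≤ j ∧ q*(j+1) ≤ p+m ∧ c j ≠ c (j+t+1)
        · -- C1
          obtain ⟨jA, hjA1, hjA2, hGA⟩ := hAex
          obtain ⟨jB, hjB1, hjB2, hGB⟩ := hBex
          have eA : q*(jA+1) = q*jA + q := by ring
          have eB : q*(jB+1) = q*jB + q := by ring
          have hA1 : q*1 ≤ q*jA := Nat.mul_le_mul_left q hjA1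
          have hB1 : q*1 ≤ q*jB := Nat.mul_le_mul_left q hjB1
          rcases le_or_gt jA jB with hle | hlt
          · have hAB : q*jA ≤ q*jB := Nat.mul_le_mul_left q hle
            have := card_four (mset c q p m) 0 0 0 0
              (q*jA - p) (min (q*jA + (q-r)) (p+m) - p)
              (q*jB + (q-r) - p) (min (q*(jB+1)) (p+m) - p)
              (by simp) (by simp)
              (subA c q p m t r hq hmt hr jA hGA)
              (subB c q p m t r hq hmt hr jB (Or.inl (by omega)) hGB)
              (by omega) (by omega) (by omega) (by omega) (by omega) (by omega)
            omega
          · have hAB : q*(jB+1) ≤ q*jA := Nat.mul_le_mul_left q (by omega)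
            have := card_four (mset c q p m) 0 0 0 0
              (q*jB + (q-r) - p) (min (q*(jB+1)) (p+m) - p)
              (q*jA - p) (min (q*jA + (q-r)) (p+m) - p)
              (by simp) (by simp)
              (subB c q p m t r hq hmt hr jB (Or.inl (by omega)) hGB)
              (subA c q p m t r hq hmt hr jA hGA)
              (by omega) (by omega) (by omega) (by omega) (by omega) (by omega)
            omega
        · -- C2
          push_neg at hBex
          have hB : ∀ j, 1 ≤ j → q*(j+1) ≤ p+m → c j = c (j+t+1) := by
            intro j hj1 hj2
            by_contra hcon
            exact hcon (by_contra fun h => absurd (hBex j hj1 hj2) (by simp [h]))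
          have hBA : ∀ j, c j = c (j+t+1) → c j ≠ c (j+t) := by
            intro j h heq
            exact hadj (j+t) (heq.symm.trans h)
          have hGA1 : c 1 ≠ c (1+t) := hBA 1 (hB 1 le_rfl (by omega))
          rcases Nat.lt_or_ge (p+r) q with hJ | hJ
          · -- C2b : J = t
            by_cases hGB0 : c 0 = c (0+t+1)
            · have hGA0 : c 0 ≠ c (0+t) := hBA 0 hGB0
              have hGBJ : c t ≠ c (t+t+1) := by
                obtain ⟨d, hd, hne⟩ := hsf (t+1) (by omega) 0
                simp only [Nat.zero_add] at hne
                rw [show d+(t+1) = d+t+1 by ring] at hne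
                rcases Nat.eq_zero_or_pos d with rfl | hd1
                · exact absurd hGB0 (by simpa using hne)
                · rcases Nat.lt_or_ge d t with hdt | hdt
                  · have hmd : q*(d+1) ≤ q*t := Nat.mul_le_mul_left q (by omega)
                    exact absurd (hB d hd1 (by omega)) hne
                  · have : d = t := by omega
                    subst this
                    exact hne
              have := card_four (mset c q p m) 0 0
                (q*0 - p) (min (q*0 + (q-r)) (p+m) - p)
                (q*1 - p) (min (q*1 + (q-r)) (p+m) - p)
                (q*t + (q-r) - p) (min (q*(t+1)) (p+m) - p)
                (by simp) (subA c q p m t r hq hmt hr 0 hGA0)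
                (subA c q p m t r hq hmt hr 1 hGA1)
                (subB c q p m t r hq hmt hr t (Or.inl (by omega)) hGBJ)
                (by omega) (by omega) (by omega) (by omega) (by omega) (by omega)
              omega
            · have := card_four (mset c q p m) 0 0 0 0
                (q*0 + (q-r) - p) (min (q*(0+1)) (p+m) - p)
                (q*1 - p) (min (q*1 + (q-r)) (p+m) - p)
                (by simp) (by simp)
                (subB c q p m t r hq hmt hr 0 (Or.inl (by omega)) hGB0)
                (subA c q p m t r hq hmt hr 1 hGA1)
                (by omega) (by omega) (by omega) (by omega) (by omega) (by omega)
              omega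
          · -- C2a : J = t+1
            have hGA2 : c 2 ≠ c (2+t) := by
              refine hBA 2 (hB 2 (by omega) ?_)
              have : q*3 ≤ q*(t+1) := Nat.mul_le_mul_left q (by omega)
              omega
            have hGB0 : c 0 ≠ c (0+t+1) := by
              obtain ⟨d, hd, hne⟩ := hsf (t+1) (by omega) 0
              simp only [Nat.zero_add] at hne
              rw [show d+(t+1) = d+t+1 by ring] at hne
              rcases Nat.eq_zero_or_pos d with rfl | hd1
              · simpa using hne
              · have hmd : q*(d+1) ≤ q*(t+1) := Nat.mul_le_mul_left q (by omega)
                exact absurd (hB d hd1 (by omega)) hne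
            have hGBJ : c (t+1) ≠ c ((t+1)+t+1) := by
              obtain ⟨d, hd, hne⟩ := hsf (t+1) (by omega) 1
              rw [show 1+d+(t+1) = (1+d)+t+1 by ring] at hne
              rcases Nat.lt_or_ge (1+d) (t+1) with hdt | hdt
              · have hmd : q*(1+d+1) ≤ q*(t+1) := Nat.mul_le_mul_left q (by omega)
                exact absurd (hB (1+d) (by omega) (by omega)) hne
              · have : 1+d = t+1 := by omega
                rw [this] at hne
                exact hne
            have := card_four (mset c q p m)
              (q*0 + (q-r) - p) (min (q*(0+1)) (p+m) - p)
              (q*1 - p) (min (q*1 + (q-r)) (p+m) - p)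
              (q*2 - p) (min (q*2 + (q-r)) (p+m) - p)
              (q*(t+1) + (q-r) - p) (min (q*(t+1+1)) (p+m) - p)
              (subB c q p m t r hq hmt hr 0 (Or.inr (by omega)) hGB0)
              (subA c q p m t r hq hmt hr 1 hGA1)
              (subA c q p m t r hq hmt hr 2 hGA2)
              (subB c q p m t r hq hmt hr (t+1) (Or.inl (by omega)) hGBJ)
              (by omega) (by omega) (by omega) (by omega) (by omega) (by omega)
            omega
      · -- C3
        push_neg at hAex
        have hA : ∀ j, 1 ≤ j → q*(j+1) ≤ p+m → c j = c (j+t) := by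
          intro j hj1 hj2
          by_contra hcon
          exact hcon (by_contra fun h => absurd (hAex j hj1 hj2) (by simp [h]))
        have hAB : ∀ j, c j = c (j+t) → c j ≠ c (j+t+1) := by
          intro j h heq
          exact hadj (j+t) (h.symm.trans heq)
        have hJ : p + r < q := by
          by_contra hcon
          obtain ⟨d, hd, hne⟩ := hsf t ht 1
          have hmd : q*(1+d+1) ≤ q*(t+1) := Nat.mul_le_mul_left q (by omega)
          exact absurd (hA (1+d) (by omega) (by omega)) hne
        have hGA0 : c 0 ≠ c (0+t) := by
          obtain ⟨d, hd, hne⟩ := hsf t ht 0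
          simp only [Nat.zero_add] at hne
          rcases Nat.eq_zero_or_pos d with rfl | hd1
          · simpa using hne
          · have hmd : q*(d+1) ≤ q*t := Nat.mul_le_mul_left q (by omega)
            exact absurd (hA d hd1 (by omega)) hne
        have hGAJ : c t ≠ c (t+t) := by
          obtain ⟨d, hd, hne⟩ := hsf t ht 1
          rcases Nat.lt_or_ge (1+d) t with hdt | hdt
          · have hmd : q*(1+d+1) ≤ q*t := Nat.mul_le_mul_left q (by omega)
            exact absurd (hA (1+d) (by omega) (by omega)) hne
          · have : 1+d = t := by omega
            rw [this] at hne
            exact hne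
        have hGB1 : c 1 ≠ c (1+t+1) := hAB 1 (hA 1 le_rfl (by omega))
        have := card_four (mset c q p m) 0 0
          (q*0 - p) (min (q*0 + (q-r)) (p+m) - p)
          (q*1 + (q-r) - p) (min (q*(1+1)) (p+m) - p)
          (q*t - p) (min (q*t + (q-r)) (p+m) - p)
          (by simp) (subA c q p m t r hq hmt hr 0 hGA0)
          (subB c q p m t r hq hmt hr 1 (Or.inl (by omega)) hGB1)
          (subA c q p m t r hq hmt hr t hGAJ)
          (by omega) (by omega) (by omega) (by omega) (by omega) (by omega)
        omega
    · -- t = 1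
      have ht1 : t = 1 := by omega
      subst ht1
      rcases Nat.lt_or_ge q (p+r) with hJ | hJ
      · -- J = 2
        by_cases hGB1 : c 1 = c (1+1+1)
        · have hGB0 : c 0 ≠ c (0+1+1) := by
            obtain ⟨d, hd, hne⟩ := hsf 2 (by omega) 0
            simp only [Nat.zero_add] at hne
            rw [show d+2 = d+1+1 by ring] at hne
            rcases Nat.eq_zero_or_pos d with rfl | hd1
            · simpa using hne
            · have : d = 1 := by omega
              subst this
              exact absurd hGB1 hne
          have hGB2 : c 2 ≠ c (2+1+1) := by
            obtain ⟨d, hd, hne⟩ := hsf 2 (by omega) 1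
            rw [show 1+d+2 = (1+d)+1+1 by ring] at hne
            rcases Nat.eq_zero_or_pos d with rfl | hd1
            · exact absurd hGB1 (by simpa using hne)
            · have : 1+d = 2 := by omega
              rw [this] at hne
              exact hne
          have := card_four (mset c q p m)
            (q*0 + (q-r) - p) (min (q*(0+1)) (p+m) - p)
            (q*1 - p) (min (q*1 + (q-r)) (p+m) - p)
            (q*2 - p) (min (q*2 + (q-r)) (p+m) - p)
            (q*2 + (q-r) - p) (min (q*(2+1)) (p+m) - p)
            (subB c q p m 1 r hq hmt hr 0 (Or.inr (by omega)) hGB0)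
            (subA c q p m 1 r hq hmt hr 1 (hadj 1))
            (subA c q p m 1 r hq hmt hr 2 (hadj 2))
            (subB c q p m 1 r hq hmt hr 2 (Or.inl (by omega)) hGB2)
            (by omega) (by omega) (by omega) (by omega) (by omega) (by omega)
          omega
        · have := card_four (mset c q p m) 0 0 0 0
            (q*1 - p) (min (q*1 + (q-r)) (p+m) - p)
            (q*1 + (q-r) - p) (min (q*(1+1)) (p+m) - p)
            (by simp) (by simp)
            (subA c q p m 1 r hq hmt hr 1 (hadj 1))
            (subB c q p m 1 r hq hmt hr 1 (Or.inl (by omega)) hGB1)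
            (by omega) (by omega) (by omega) (by omega) (by omega) (by omega)
          omega
      · -- J = 1 : p + r ≤ q
        obtain ⟨d, hd, hne⟩ := hsf 2 (by omega) 0
        simp only [Nat.zero_add] at hne
        rw [show d+2 = d+1+1 by ring] at hne
        rcases Nat.eq_zero_or_pos d with rfl | hd1
        · -- ¬GB 0
          have := card_four (mset c q p m) 0 0
            (q*0 - p) (min (q*0 + (q-r)) (p+m) - p)
            (q*0 + (q-r) - p) (min (q*(0+1)) (p+m) - p)
            (q*1 - p) (min (q*1 + (q-r)) (p+m) - p)
            (by simp) (subA c q p m 1 r hq hmt hr 0 (hadj 0))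
            (subB c q p m 1 r hq hmt hr 0 (Or.inl (by omega)) hne)
            (subA c q p m 1 r hq hmt hr 1 (hadj 1))
            (by omega) (by omega) (by omega) (by omega) (by omega) (by omega)
          omega
        · -- d = 1 : ¬GB 1
          have hd' : d = 1 := by omega
          subst hd'
          have := card_four (mset c q p m) 0 0
            (q*0 - p) (min (q*0 + (q-r)) (p+m) - p)
            (q*1 - p) (min (q*1 + (q-r)) (p+m) - p)
            (q*1 + (q-r) - p) (min (q*(1+1)) (p+m) - p)
            (by simp) (subA c q p m 1 r hq hmt hr 0 (hadj 0))
            (subA c q p m 1 r hq hmt hr 1 (hadj 1))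
            (subB c q p m 1 r hq hmt hr 1 (Or.inl (by omega)) hne)
            (by omega) (by omega) (by omega) (by omega) (by omega) (by omega)
          omega

lemma main_gen (c : ℕ → Fin 3)
    (hsf : ∀ τ, 1 ≤ τ → ∀ j, ∃ i, i < τ ∧ c (j+i) ≠ c (j+i+τ))
    (q p m : ℕ) (hq : 1 ≤ q) (hm : q ≤ m) :
    q ≤ (mset c q p m).card := by
  have hdm := Nat.div_add_mod p q
  have h1 : ∀ i, (p+i)/q = p/q + (p%q + i)/q := by
    intro i
    conv_lhs => rw [show p + i = q*(p/q) + (p%q + i) by omega]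
    rw [Nat.mul_add_div (by omega)]
  have h2 : ∀ i, (p+i+m)/q = p/q + (p%q + i + m)/q := by
    intro i
    conv_lhs => rw [show p + i + m = q*(p/q) + (p%q + i + m) by omega]
    rw [Nat.mul_add_div (by omega)]
  have hsf' : ∀ τ, 1 ≤ τ → ∀ j, ∃ i, i < τ ∧
      (fun j => c (p/q + j)) (j+i) ≠ (fun j => c (p/q + j)) (j+i+τ) := by
    intro τ hτ j
    obtain ⟨i, hi, hne⟩ := hsf τ hτ (p/q + j)
    refine ⟨i, hi, ?_⟩
    simpa only [show p/q + (j+i) = p/q + j + i by ring,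
      show p/q + (j+i+τ) = p/q + j + i + τ by ring] using hne
  have key := main_norm (fun j => c (p/q + j)) hsf' q (p%q) m hq hm
    (Nat.mod_lt _ (by omega))
  have hset : mset (fun j => c (p/q + j)) q (p%q) m = mset c q p m := by
    unfold mset
    apply Finset.filter_congr
    intro i _
    rw [h1 i, h2 i]
  rwa [hset] at key

lemma count_bridge (m : ℕ) (P : ℕ → Prop) [DecidablePred P] :
    (List.range m).countP (fun i => decide (P i)) = ((Finset.range m).filter P).card := by
  induction m with
  | zero => simp
  | succ n ih =>
    rw [List.range_succ, List.countP_append, Finset.range_add_one, Finset.filter_insert]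
    by_cases h : P n
    · rw [if_pos h, Finset.card_insert_of_notMem (by simp)]
      simp [h, ih]
    · rw [if_neg h]
      simp [h, ih]


/-- Over a three-letter alphabet, the set `S_3^{3,k}` is incomplete: there are
words of arbitrarily large length free from it. -/
theorem S3_incomplete (k : ℕ) :
    ∀ N : ℕ, ∃ w : List (Fin 3), N ≤ w.length ∧ ∀ v ∈ Proh 3 k, ¬ v <:+: w := by
  intro N
  set q := k + 1 with hqdef
  refine ⟨(List.range N).map (fun x => cw (x/q)), by simp, ?_⟩
  rintro v ⟨X, Y, rfl, hlen, hX, hcount⟩ hinf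
  obtain ⟨s, t', hw⟩ := hinf
  set p := s.length with hpdef
  set m := X.length with hmdef
  have hYlen : Y.length = m := hlen.symm
  have hwlen : (s ++ (X ++ Y) ++ t').length = N := by rw [hw]; simp
  have hNlen : p + 2*m + t'.length = N := by
    have h0 := hwlen
    simp only [List.length_append] at h0
    omega
  have hvget : ∀ i (hi : i < 2*m), (X ++ Y)[i]'(by simp [hYlen]; omega) = cw ((p+i)/q) := by
    intro i hi
    have hb1 : p + i < (s ++ (X ++ Y)).length := by simp [hYlen]; omega
    have hb2 : p + i < N := by omega
    calc (X ++ Y)[i]'(by simp [hYlen]; omega)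
        = (s ++ (X ++ Y))[p + i]'hb1 := by
          rw [List.getElem_append_right (by omega : s.length ≤ p + i)]
          congr 1
          omega
      _ = ((s ++ (X ++ Y)) ++ t')[p + i]'(by simp [hYlen]; omega) :=
          (List.getElem_append_left hb1).symm
      _ = ((List.range N).map (fun x => cw (x/q)))[p + i]'(by simp; omega) :=
          List.getElem_of_eq hw _
      _ = cw ((p+i)/q) := by
          simp
  have hXget : ∀ i (hi : i < m), X[i]'hi = cw ((p+i)/q) := by
    intro i hi
    rw [← hvget i (by omega)]
    rw [List.getElem_append_left]
  have hYget : ∀ i (hi : i < m), Y[i]'(by omega) = cw ((p+i+m)/q) := by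
    intro i hi
    have := hvget (m + i) (by omega)
    rw [List.getElem_append_right (by omega : X.length ≤ m + i)] at this
    simpa only [show m + i - X.length = i by omega, show p + (m+i) = p+i+m by ring]
      using this
  have hzip : X.zip Y = (List.range m).map
      (fun i => (cw ((p+i)/q), cw ((p+i+m)/q))) := by
    apply List.ext_getElem
    · simp [hYlen]; omega
    · intro i h1 h2
      have him : i < m := by simp [hYlen] at h1; omega
      simp only [List.getElem_zip, List.getElem_map, List.getElem_range]
      rw [hXget i him, hYget i him]
  have hbool : ∀ a b : Fin 3, (a != b) = decide (a ≠ b) := by decide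
  have hcnt2 : ((X.zip Y).countP fun pr => pr.1 != pr.2)
      = (mset cw q p m).card := by
    rw [hzip, List.countP_map]
    rw [show ((fun (pr : Fin 3 × Fin 3) => pr.1 != pr.2) ∘
        (fun i => (cw ((p+i)/q), cw ((p+i+m)/q))))
      = (fun i => decide (cw ((p+i)/q) ≠ cw ((p+i+m)/q))) from funext (fun i => hbool _ _)]
    exact count_bridge m _
  have hmain := main_gen cw cw_sf q p m (by omega) (by omega)
  omega
end

section
/- Let G be a finite directed graph on vertex set {v_1,...,v_n}, identified with the alphabet A = {a_1,...,a_n}. Let S_1 = { a_i a_j : (v_i, v_j) is not an edge of G } and S_2 = { a_i X a_i : a_i ∈ A, X a word of length ≤ n-1 }, and S = S_1 ∪ S_2. Then for every ℓ ≤ n, there exists a word of length ℓ over A free from S if and only if G contains a simple directed path visiting ℓ vertices (i.e., a directed path with no repeated vertices of length ℓ in vertices). -/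
lemma exists_dup_decomp {α : Type*} :
    ∀ {w : List α}, ¬ w.Nodup → ∃ (a : α) (s t₁ t₂ : List α),
      w = s ++ a :: t₁ ++ a :: t₂ := by
  intro w
  induction w with
  | nil => intro h; exact absurd List.nodup_nil h
  | cons b rest ih =>
    intro h
    rw [List.nodup_cons] at h
    push_neg at h
    by_cases hb : b ∈ rest
    · obtain ⟨t₁, t₂, rfl⟩ := List.append_of_mem hb
      exact ⟨b, [], t₁, t₂, rfl⟩
    · obtain ⟨a, s, t₁, t₂, rfl⟩ := ih (h hb)
      exact ⟨a, b :: s, t₁, t₂, rfl⟩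

lemma chain'_of_infix {α : Type*} {E : α → α → Prop} :
    ∀ {w : List α}, (∀ i j, [i, j] <:+: w → E i j) → w.Chain' E := by
  intro w
  induction w with
  | nil => intro _; exact List.isChain_nil
  | cons a rest ih =>
    intro h
    cases rest with
    | nil => exact List.isChain_singleton a
    | cons b rest' =>
      rw [show List.Chain' E (a :: b :: rest') ↔ _ from List.isChain_cons_cons]
      refine ⟨h a b ⟨[], rest', rfl⟩, ih ?_⟩
      intro i j hij
      exact h i j (hij.trans ⟨[a], [], by simp⟩)

/-- Let `G` be a directed graph on the vertex set `Fin n` (identified with the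
`n`-letter alphabet) with edge relation `E`.  Let
`S = S₁ ∪ S₂` where `S₁ = { a_i a_j : ¬ E i j }` and
`S₂ = { a_i X a_i : |X| ≤ n - 1 }`.  Then for `ℓ ≤ n`, there is a word of
length `ℓ` free from `S` iff `G` has a simple directed path visiting `ℓ`
vertices. -/
theorem free_word_iff_simple_path (n : ℕ) (E : Fin n → Fin n → Prop)
    (ℓ : ℕ) (hℓ : ℓ ≤ n) :
    (∃ w : List (Fin n), w.length = ℓ ∧
      ∀ v ∈ {v : List (Fin n) |
          (∃ i j : Fin n, v = [i, j] ∧ ¬ E i j) ∨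
          (∃ (i : Fin n) (X : List (Fin n)), v = i :: (X ++ [i]) ∧
            X.length ≤ n - 1)},
        ¬ v <:+: w) ↔
    (∃ p : List (Fin n), p.length = ℓ ∧ p.Nodup ∧ p.Chain' E) := by
  constructor
  · rintro ⟨w, hlen, hfree⟩
    refine ⟨w, hlen, ?_, ?_⟩
    · by_contra hnd
      obtain ⟨a, s, t₁, t₂, rfl⟩ := exists_dup_decomp hnd
      have hlen' : t₁.length ≤ n - 1 := by
        simp only [List.length_append, List.length_cons] at hlen
        omega
      refine hfree (a :: (t₁ ++ [a])) (Or.inr ⟨a, t₁, rfl, hlen'⟩) ⟨s, t₂, ?_⟩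
      simp
    · apply chain'_of_infix
      intro i j hij
      by_contra hE
      exact hfree [i, j] (Or.inl ⟨i, j, rfl, hE⟩) hij
  · rintro ⟨p, hlen, hnd, hch⟩
    refine ⟨p, hlen, ?_⟩
    rintro v (⟨i, j, rfl, hE⟩ | ⟨i, X, rfl, _⟩) hinf
    · have := hch.infix hinf
      simp [List.isChain_cons_cons] at this
      exact hE this
    · have hnd' := hnd.sublist hinf.sublist
      simp [List.nodup_cons] at hnd'
end
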